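/- arXiv:1609.00769 — 5 statements merged into one kernel-verified Lean document; each statement's English description precedes it below -/
import Mathlib

section
/- Let X, Y, Z be nonnegative random variables on a probability space and let K > 0 be a constant such that Y ≥ K·Z almost surely. Suppose there exist constants N₀ ≥ 0, g > 0 and δ > 0 such that for every b > 0 and every N > N₀ one has P(X > b and N·Y ≤ b) ≤ exp(−g·N^δ). Then for every b > 0 and every N > 0 satisfying K·N²/(K·N + 1) > N₀ one has P(X + Z > b and N·Y + Z ≤ b) ≤ exp(−g·(K·N²/(K·N + 1))^δ). -/
open MeasureTheory

/-- Probabilistic perturbation lemma: if `Y ≥ K·Z` a.s. and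
`P(X > b, N·Y ≤ b) ≤ exp(−g·N^δ)` for all `b > 0`, `N > N₀`, then
`P(X + Z > b, N·Y + Z ≤ b) ≤ exp(−g·(K·N²/(K·N+1))^δ)` whenever
`K·N²/(K·N+1) > N₀`. -/
theorem prob_perturbation_lemma
    {Ω : Type*} [MeasurableSpace Ω] (P : Measure Ω) [IsProbabilityMeasure P]
    (X Y Z : Ω → ℝ) (hXm : Measurable X) (hYm : Measurable Y) (hZm : Measurable Z)
    (hX : ∀ ω, 0 ≤ X ω) (hY : ∀ ω, 0 ≤ Y ω) (hZ : ∀ ω, 0 ≤ Z ω)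
    (K : ℝ) (hK : 0 < K) (hYZ : ∀ᵐ ω ∂P, Y ω ≥ K * Z ω)
    (N₀ g δ : ℝ) (hN₀ : 0 ≤ N₀) (hg : 0 < g) (hδ : 0 < δ)
    (h : ∀ b > (0:ℝ), ∀ N > N₀,
      P {ω | X ω > b ∧ N * Y ω ≤ b} ≤ ENNReal.ofReal (Real.exp (-(g * N ^ δ)))) :
    ∀ b > (0:ℝ), ∀ N > (0:ℝ), K * N ^ 2 / (K * N + 1) > N₀ →
      P {ω | X ω + Z ω > b ∧ N * Y ω + Z ω ≤ b} ≤
        ENNReal.ofReal (Real.exp (-(g * (K * N ^ 2 / (K * N + 1)) ^ δ))) := by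
  intro b hb N hN hM
  set M : ℝ := K * N ^ 2 / (K * N + 1) with hMdef
  have hKN1 : (0:ℝ) < K * N + 1 := by positivity
  set b' : ℝ := b * (K * N) / (K * N + 1) with hb'def
  have hb' : 0 < b' := by positivity
  have hsub : ∀ᵐ ω ∂P, ω ∈ {ω | X ω + Z ω > b ∧ N * Y ω + Z ω ≤ b} →
      ω ∈ {ω | X ω > b' ∧ M * Y ω ≤ b'} := by
    filter_upwards [hYZ] with ω hyz
    rintro ⟨hx, hnz⟩
    have hNY : N * Y ω ≤ b := by nlinarith [hZ ω]
    have hz : Z ω * (K * N + 1) ≤ b := by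
      nlinarith [mul_nonneg hN.le (sub_nonneg.mpr hyz)]
    refine ⟨?_, ?_⟩
    · rw [hb'def, gt_iff_lt, div_lt_iff₀ hKN1]
      nlinarith
    · rw [hMdef, hb'def, div_mul_eq_mul_div, div_le_div_iff₀ hKN1 hKN1]
      nlinarith [mul_nonneg (mul_nonneg hK.le hN.le) hKN1.le]
  calc P {ω | X ω + Z ω > b ∧ N * Y ω + Z ω ≤ b}
      ≤ P {ω | X ω > b' ∧ M * Y ω ≤ b'} := measure_mono_ae hsub
    _ ≤ _ := h b' hb' M hM
end

section
/- Exponent reduction in time. Fix a dimension n ≥ 1, exponents q > 0, α > 0 and β ∈ (α/2, α), and let u : Ω × Q₁ → ℝ be jointly measurable with ‖u‖_{α,q,Q₁} < ∞ almost surely. Suppose there exist constants δ(α) > 0 and Γ(α) ≥ 1 such that for all 0 < r < R ≤ 1, all a > 0 and all Γ > Γ(α), P( ‖u‖_{∞,Q_r} > a and (R−r)^{−(n/q+2/α)}·‖u‖_{α,q,Q_R} ≤ a/Γ ) ≤ exp(−Γ^{δ(α)}/R²). Then there exist constants δ(β) > 0 and Γ(β) ≥ 1, depending only on n, q, α, β,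 δ(α) and Γ(α), such that for all Γ > Γ(β), all a > 0 and all 0 < r ≤ 1/2, P( ‖u‖_{∞,Q_r} > a and r^{−(n/q+2/β)}·‖u‖_{β,q,Q_{2r}} ≤ a/Γ ) ≤ exp(−Γ^{δ(β)}/(4r²)). -/
open MeasureTheory
open scoped ENNReal

noncomputable section

/-- The parabolic cylinder `Q_r(t₀,x₀) = (t₀ - r², t₀] × B_r(x₀)`, where the ball is
taken with respect to the sup norm on `Fin n → ℝ`. -/
def pCyl (n : ℕ) (r : ℝ) (c : ℝ × (Fin n → ℝ)) : Set (ℝ × (Fin n → ℝ)) :=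
  Set.Ioc (c.1 - r ^ 2) c.1 ×ˢ Metric.ball c.2 r

/-- The mixed norm `‖h‖_{p,q,I×B} = (∫_I (∫_B |h(t,x)|^q dx)^{p/q} dt)^{1/p}`,
valued in `ℝ≥0∞`. -/
def mixedNorm (n : ℕ) (p q : ℝ) (I : Set ℝ) (B : Set (Fin n → ℝ))
    (h : ℝ × (Fin n → ℝ) → ℝ) : ℝ≥0∞ :=
  (∫⁻ t in I, (∫⁻ x in B, ENNReal.ofReal (|h (t, x)| ^ q)) ^ (p / q)) ^ (1 / p)

/-- The essential supremum of `|h|` over `D ⊆ ℝ × ℝⁿ` with respect to Lebesgue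
measure, valued in `ℝ≥0∞`. -/
def supNorm (n : ℕ) (D : Set (ℝ × (Fin n → ℝ))) (h : ℝ × (Fin n → ℝ) → ℝ) : ℝ≥0∞ :=
  essSup (fun z => ENNReal.ofReal |h z|) (volume.restrict D)

open Filter Topology

/-!
Iterate the estimate at exponent `α` along the radii `R k = r (2 - 2⁻ᵏ)`, which increase from
`r` to `2 r`, and the levels `a Λ ^ k`. If `|u| > a Λ ^ k` somewhere on `Q_{R k}` but
`|u| ≤ a Λ ^ (k + 1)` on `Q_{R (k+1)}`, interpolating between `L^∞` and `L^β_t L^q_x` bounds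
`‖u‖_{α,q,Q_{R (k+1)}}` by a power of `a Λ ^ (k + 1)` times `‖u‖_{β,q,Q_{2r}} ^ (β / α)`. With
`Λ ^ (β / α) = 2 ^ (n / q + 2 / α + 1)` this is exactly the smallness the `α`-estimate needs with
`Γ_k = c 2 ^ k Γ ^ (β / α)`, so the `k`-th step costs at most
`exp (-Γ ^ (β δ / (2 α)) / (4 r²)) 2^{-(k+1)}`. What is left after `N` steps tends to `0`, because
`‖u‖_{α,q,Q₁}` is a.s. finite while `a Λ ^ N (1 - R N) ^ (n / q + 2 / α) → ∞`.
-/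

lemma measurable_mixedNorm {Ω : Type*} [MeasurableSpace Ω] {n : ℕ}
    {u : Ω → ℝ × (Fin n → ℝ) → ℝ} (hu : Measurable (Function.uncurry u))
    (p q : ℝ) (I : Set ℝ) (B : Set (Fin n → ℝ)) :
    Measurable fun ω => mixedNorm n p q I B (u ω) := by
  have hslice : Measurable fun z : (Ω × ℝ) × (Fin n → ℝ) =>
      ENNReal.ofReal (|u z.1.1 (z.1.2, z.2)| ^ q) :=
    ((hu.comp (measurable_fst.fst.prodMk (measurable_fst.snd.prodMk measurable_snd))).abs.pow_const
      q).ennreal_ofReal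
  exact ((hslice.lintegral_prod_right'.pow_const _).lintegral_prod_right').pow_const _

lemma mixedNorm_rpow {n : ℕ} {p : ℝ} (hp : p ≠ 0) (q : ℝ) (I : Set ℝ) (B : Set (Fin n → ℝ))
    (h : ℝ × (Fin n → ℝ) → ℝ) :
    mixedNorm n p q I B h ^ p =
      ∫⁻ t in I, (∫⁻ x in B, ENNReal.ofReal (|h (t, x)| ^ q)) ^ (p / q) := by
  rw [mixedNorm, ← ENNReal.rpow_mul, one_div_mul_cancel hp, ENNReal.rpow_one]

lemma mixedNorm_mono_set {n : ℕ} {p q : ℝ} (hp : 0 ≤ p) (hq : 0 ≤ q) {I I' : Set ℝ}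
    {B B' : Set (Fin n → ℝ)} (hI : I ⊆ I') (hB : B ⊆ B') (h : ℝ × (Fin n → ℝ) → ℝ) :
    mixedNorm n p q I B h ≤ mixedNorm n p q I' B' h := by
  refine ENNReal.rpow_le_rpow ?_ (one_div_nonneg.2 hp)
  exact (lintegral_mono fun t => ENNReal.rpow_le_rpow (lintegral_mono_set hB)
    (div_nonneg hp hq)).trans (lintegral_mono_set hI)

/-- On each time slice the `L^q` norm is at most `A ^ q * |B|`; this pays for the excess
exponent `α - β`. -/
lemma mixedNorm_rpow_le_of_supNorm_le {n : ℕ} {v : ℝ × (Fin n → ℝ) → ℝ} (hv : Measurable v)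
    {q α β : ℝ} (hq : 0 < q) (hβ : 0 < β) (hβα : β ≤ α) {I : Set ℝ} {B : Set (Fin n → ℝ)}
    {A : ℝ≥0∞} (hA : supNorm n (I ×ˢ B) v ≤ A) :
    mixedNorm n α q I B v ^ α ≤
      (A ^ q * volume B) ^ ((α - β) / q) * mixedNorm n β q I B v ^ β := by
  set g : ℝ → ℝ≥0∞ := fun t => ∫⁻ x in B, ENNReal.ofReal (|v (t, x)| ^ q)
  have hg : Measurable g := ((hv.abs.pow_const q).ennreal_ofReal).lintegral_prod_right'
  have hvA : ∀ᵐ z ∂(volume.restrict I).prod (volume.restrict B), ENNReal.ofReal |v z| ≤ A := by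
    rw [Measure.prod_restrict, ← Measure.volume_eq_prod]
    exact (ENNReal.ae_le_essSup _).mono fun z hz => hz.trans hA
  have hgA : ∀ᵐ t ∂volume.restrict I, g t ≤ A ^ q * volume B := by
    filter_upwards [Measure.ae_ae_of_ae_prod hvA] with t ht
    calc g t ≤ ∫⁻ _ in B, A ^ q := lintegral_mono_ae <| ht.mono fun x hx => by
          rw [← ENNReal.ofReal_rpow_of_nonneg (abs_nonneg _) hq.le]
          exact ENNReal.rpow_le_rpow hx hq.le
      _ = A ^ q * volume B := setLIntegral_const _ _
  have hsplit : ∀ᵐ t ∂volume.restrict I,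
      g t ^ (α / q) ≤ (A ^ q * volume B) ^ ((α - β) / q) * g t ^ (β / q) := by
    filter_upwards [hgA] with t ht
    rw [show α / q = (α - β) / q + β / q by ring,
      ENNReal.rpow_add_of_nonneg _ _ (div_nonneg (sub_nonneg.2 hβα) hq.le)
        (div_nonneg hβ.le hq.le)]
    gcongr
  rw [mixedNorm_rpow (hβ.trans_le hβα).ne', mixedNorm_rpow hβ.ne',
    ← lintegral_const_mul _ (hg.pow_const _)]
  exact lintegral_mono_ae hsplit

lemma mixedNorm_cyl_le_of_supNorm_le {n : ℕ} {v : ℝ × (Fin n → ℝ) → ℝ} (hv : Measurable v)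
    {q α β ρ τ b M D : ℝ} (hq : 0 < q) (hβ : 0 < β) (hβα : β ≤ α) (hρ : 0 < ρ) (hρτ : ρ ≤ τ)
    (hb : 0 ≤ b) (hM : 0 ≤ M) (hD : (2 * ρ) ^ n ≤ D)
    (hS : supNorm n (pCyl n ρ (1, 0)) v ≤ ENNReal.ofReal b)
    (hN : mixedNorm n β q (Set.Ioc (1 - τ ^ 2) 1) (Metric.ball 0 τ) v ≤ ENNReal.ofReal M) :
    mixedNorm n α q (Set.Ioc (1 - ρ ^ 2) 1) (Metric.ball 0 ρ) v ≤
      ENNReal.ofReal (((b ^ q * D) ^ ((α - β) / q) * M ^ β) ^ (1 / α)) := by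
  have hα : 0 < α := hβ.trans_le hβα
  have hD₀ : 0 ≤ D := (by positivity : (0 : ℝ) ≤ (2 * ρ) ^ n).trans hD
  have hvol : volume (Metric.ball (0 : Fin n → ℝ) ρ) ≤ ENNReal.ofReal D := by
    rw [Real.volume_pi_ball _ hρ, Fintype.card_fin]
    exact ENNReal.ofReal_le_ofReal hD
  have hβnorm : mixedNorm n β q (Set.Ioc (1 - ρ ^ 2) 1) (Metric.ball 0 ρ) v ≤ ENNReal.ofReal M :=
    (mixedNorm_mono_set hβ.le hq.le (Set.Ioc_subset_Ioc_left (by nlinarith))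
      (Metric.ball_subset_ball hρτ) v).trans hN
  have hpow := (mixedNorm_rpow_le_of_supNorm_le hv hq hβ hβα hS).trans <|
    mul_le_mul' (ENNReal.rpow_le_rpow (mul_le_mul_right hvol _)
      (div_nonneg (sub_nonneg.2 hβα) hq.le)) (ENNReal.rpow_le_rpow hβnorm hβ.le)
  rw [ENNReal.ofReal_rpow_of_nonneg hb hq.le, ← ENNReal.ofReal_mul (by positivity),
    ENNReal.ofReal_rpow_of_nonneg (by positivity) (div_nonneg (sub_nonneg.2 hβα) hq.le),
    ENNReal.ofReal_rpow_of_nonneg hM hβ.le, ← ENNReal.ofReal_mul (by positivity)] at hpow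
  calc _ = (mixedNorm n α q (Set.Ioc (1 - ρ ^ 2) 1) (Metric.ball 0 ρ) v ^ α) ^ (1 / α) := by
        rw [← ENNReal.rpow_mul, mul_one_div_cancel hα.ne', ENNReal.rpow_one]
    _ ≤ _ := by
        rw [← ENNReal.ofReal_rpow_of_nonneg (by positivity) (by positivity)]
        exact ENNReal.rpow_le_rpow hpow (by positivity)

lemma tendsto_measure_ofReal_lt_of_ae_lt_top {X : Type*} [MeasurableSpace X] {μ : Measure X}
    [IsFiniteMeasure μ] {f : X → ℝ≥0∞} (hf : Measurable f) (hfin : ∀ᵐ x ∂μ, f x < ∞) :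
    Tendsto (fun c : ℝ => μ {x | ENNReal.ofReal c < f x}) atTop (𝓝 0) := by
  have hlim := tendsto_measure_iInter_atTop (μ := μ)
    (fun c : ℝ => (measurableSet_lt measurable_const hf).nullMeasurableSet)
    (fun c c' hcc' x hx => (ENNReal.ofReal_le_ofReal hcc').trans_lt hx) ⟨0, measure_ne_top μ _⟩
  refine (measure_mono_null (fun x hx hfx => ?_) (ae_iff.1 hfin)) ▸ hlim
  have hx := Set.mem_iInter.1 hx (f x).toReal
  rw [Set.mem_ofPred_eq, ENNReal.ofReal_toReal hfx.ne] at hx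
  exact lt_irrefl _ hx

lemma ENNReal.le_tsum_of_le_add_succ {x ε : ℕ → ℝ≥0∞} (hstep : ∀ k, x k ≤ ε k + x (k + 1))
    (hx : Tendsto x atTop (𝓝 0)) : x 0 ≤ ∑' k, ε k := by
  have hpartial : ∀ N, x 0 ≤ ∑ k ∈ Finset.range N, ε k + x N := by
    intro N
    induction N with
    | zero => simp
    | succ N ih =>
      rw [Finset.sum_range_succ, add_assoc]
      exact ih.trans (add_le_add_right (hstep N) _)
  have hlim : Tendsto (fun N => ∑' k, ε k + x N) atTop (𝓝 (∑' k, ε k)) := by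
    simpa using tendsto_const_nhds.add hx
  exact ge_of_tendsto' hlim fun N =>
    (hpartial N).trans (add_le_add_left (ENNReal.sum_le_tsum _) _)

lemma ofReal_exp_neg_div_sq_le {w X ρ r : ℝ} {k : ℕ} (hw : 0 ≤ w) (hρ : 0 < ρ) (hρr : ρ ≤ 2 * r)
    (hr2 : r ≤ 1 / 2) (hX : w + (k + 1) ≤ X) :
    ENNReal.ofReal (Real.exp (-(X / ρ ^ 2))) ≤
      ENNReal.ofReal (Real.exp (-(w / (4 * r ^ 2)))) * 2⁻¹ ^ (k + 1) := by
  have hr : 0 < r := by linarith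
  have hρ4 : ρ ^ 2 ≤ 4 * r ^ 2 := by nlinarith
  have h4r : 4 * r ^ 2 ≤ 1 := by nlinarith
  have hexp1 : Real.exp (-1) ≤ 1 / 2 := by
    rw [Real.exp_neg, one_div]
    exact inv_anti₀ two_pos (by linarith [Real.add_one_le_exp 1])
  have hkX : w / (4 * r ^ 2) + (k + 1) ≤ X / ρ ^ 2 :=
    calc w / (4 * r ^ 2) + (k + 1) ≤ w / (4 * r ^ 2) + (k + 1) / (4 * r ^ 2) := by
          gcongr
          exact le_div_self (by positivity) (by positivity) h4r
      _ ≤ X / (4 * r ^ 2) := by rw [← add_div]; gcongr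
      _ ≤ X / ρ ^ 2 := by gcongr; linarith
  calc ENNReal.ofReal (Real.exp (-(X / ρ ^ 2)))
      ≤ ENNReal.ofReal (Real.exp (-(w / (4 * r ^ 2))) * Real.exp (-1) ^ (k + 1)) := by
        rw [← Real.exp_nat_mul, ← Real.exp_add]
        gcongr
        push_cast
        linarith
    _ ≤ ENNReal.ofReal (Real.exp (-(w / (4 * r ^ 2))) * (1 / 2) ^ (k + 1)) := by gcongr
    _ = ENNReal.ofReal (Real.exp (-(w / (4 * r ^ 2)))) * 2⁻¹ ^ (k + 1) := by
        rw [ENNReal.ofReal_mul (Real.exp_pos _).le, ENNReal.ofReal_pow (by norm_num), one_div,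
          ENNReal.ofReal_inv_of_pos two_pos, ENNReal.ofReal_ofNat]

lemma ENNReal.tsum_mul_inv_two_pow_succ (c : ℝ≥0∞) : ∑' k : ℕ, c * 2⁻¹ ^ (k + 1) = c := by
  simp_rw [pow_succ, ← mul_assoc, ENNReal.tsum_mul_right, ENNReal.tsum_mul_left,
    ENNReal.tsum_geometric_two, mul_assoc, ENNReal.mul_inv_cancel two_ne_zero ENNReal.ofNat_ne_top,
    mul_one]

/-- The powers of `r` cancel, and `Λ ^ (β / α) = 2 ^ (n / q + 2 / α + 1)` turns the growth of the
levels `a Λ ^ k` against the shrinking gaps `r 2^{-(k+1)}` into the single factor `2 ^ k`. -/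
lemma gap_rpow_mul_interpolation_eq {n : ℕ} {q α β r a Γ Λ : ℝ} (hq : 0 < q) (hα : 0 < α)
    (hβ : 0 < β) (hr : 0 < r) (ha : 0 < a) (hΓ : 0 < Γ) (hΛ : 0 < Λ)
    (hΛβ : Λ ^ (β / α) = 2 ^ ((n : ℝ) / q + 2 / α + 1)) (k : ℕ) :
    (r * (1 / 2) ^ (k + 1)) ^ (-((n : ℝ) / q + 2 / α)) *
        (((a * Λ ^ (k + 1)) ^ q * (4 * r) ^ n) ^ ((α - β) / q) *
          (r ^ ((n : ℝ) / q + 2 / β) * (a / Γ)) ^ β) ^ (1 / α) =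
      a * Λ ^ k / (2 * 4 ^ (-((n : ℝ) / q) * (1 - β / α)) / Λ * 2 ^ k * Γ ^ (β / α)) := by
  have hlogΛ : Real.log Λ = ((n : ℝ) / q + 2 / α + 1) * Real.log 2 / (β / α) := by
    rw [eq_div_iff (by positivity), mul_comm, ← Real.log_rpow hΛ, ← Real.log_rpow two_pos, hΛβ]
  have hlog4 : Real.log 4 = 2 * Real.log 2 := by
    rw [show (4 : ℝ) = 2 ^ 2 by norm_num, Real.log_pow, Nat.cast_ofNat]
  refine Real.log_injOn_pos (Set.mem_Ioi.2 (by positivity)) (Set.mem_Ioi.2 (by positivity)) ?_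
  simp (disch := positivity) only [Real.log_mul, Real.log_div, Real.log_rpow, Real.log_pow,
    Real.log_inv, one_div, hlog4, hlogΛ]
  push_cast
  field_simp
  ring

lemma le_ofReal_rpow_mul_of_ofReal_rpow_neg_mul_le {s κ y : ℝ} {X : ℝ≥0∞} (hs : 0 < s)
    (h : ENNReal.ofReal (s ^ (-κ)) * X ≤ ENNReal.ofReal y) : X ≤ ENNReal.ofReal (s ^ κ * y) := by
  have hsκ : 0 ≤ s ^ κ := Real.rpow_nonneg hs.le κ
  calc X = ENNReal.ofReal (s ^ κ) * (ENNReal.ofReal (s ^ (-κ)) * X) := by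
        rw [← mul_assoc, ← ENNReal.ofReal_mul hsκ, ← Real.rpow_add hs, add_neg_cancel,
          Real.rpow_zero, ENNReal.ofReal_one, one_mul]
    _ ≤ ENNReal.ofReal (s ^ κ * y) := by
        rw [ENNReal.ofReal_mul hsκ]
        exact mul_le_mul_right h _

lemma two_rpow_add_one_le_of_rpow_eq {Λ θ κ : ℝ} (hΛ : 0 < Λ) (hθ : 0 < θ) (hθ1 : θ ≤ 1)
    (hκ : 0 ≤ κ) (h : Λ ^ θ = 2 ^ (κ + 1)) : 2 ^ (κ + 1) ≤ Λ := by
  have hΛ1 : 1 ≤ Λ := by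
    by_contra! hlt
    have := Real.rpow_lt_one hΛ.le hlt hθ
    rw [h] at this
    exact this.not_ge (Real.one_le_rpow one_le_two (by positivity))
  rw [← h]
  exact Real.rpow_le_self_of_one_le hΛ1 hθ1

lemma tendsto_mul_pow_mul_rpow_atTop {κ r a Λ : ℝ} (hκ : 0 ≤ κ) (hr : 0 < r) (hr2 : r ≤ 1 / 2)
    (ha : 0 < a) (hΛ : 2 ^ (κ + 1) ≤ Λ) :
    Tendsto (fun N : ℕ => a * Λ ^ N * (1 - r * (2 - (1 / 2) ^ N)) ^ κ) atTop atTop := by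
  have hΛ0 : 0 < Λ := (by positivity : (0 : ℝ) < 2 ^ (κ + 1)).trans_le hΛ
  have hΛ2 : 2 ≤ Λ * (1 / 2) ^ κ := by
    calc (2 : ℝ) = 2 ^ (κ + 1) * (1 / 2) ^ κ := by
          rw [Real.rpow_add two_pos, Real.rpow_one, Real.div_rpow zero_le_one zero_le_two,
            Real.one_rpow]
          field_simp
      _ ≤ Λ * (1 / 2) ^ κ := by gcongr
  refine tendsto_atTop_mono (fun N => ?_) <|
    (tendsto_pow_atTop_atTop_of_one_lt one_lt_two).const_mul_atTop
      (by positivity : 0 < a * r ^ κ)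
  calc a * r ^ κ * 2 ^ N ≤ a * r ^ κ * (Λ * (1 / 2) ^ κ) ^ N := by gcongr
    _ = a * Λ ^ N * (r * (1 / 2) ^ N) ^ κ := by
        rw [mul_pow, Real.rpow_pow_comm (by norm_num), Real.mul_rpow hr.le (by positivity)]
        ring
    _ ≤ a * Λ ^ N * (1 - r * (2 - (1 / 2) ^ N)) ^ κ := by
        refine mul_le_mul_of_nonneg_left (Real.rpow_le_rpow (by positivity) ?_ hκ)
          (mul_pos ha (pow_pos hΛ0 N)).le
        linarith

lemma eventually_add_le_mul_two_rpow_mul_sq {C δ : ℝ} (hC : 0 < C) (hδ : 0 < δ) :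
    ∀ᶠ w in atTop, ∀ k : ℕ, w + (k + 1) ≤ C * 2 ^ (k * δ) * w ^ 2 := by
  have hlog : 0 < C * δ * Real.log 2 := by positivity
  filter_upwards [eventually_ge_atTop 1, eventually_ge_atTop (2 / C),
    eventually_ge_atTop (1 / (C * δ * Real.log 2))] with w hw1 hwC hwlog k
  have hCw : 2 ≤ C * w := by rwa [div_le_iff₀' hC] at hwC
  have hlogw : 1 ≤ C * δ * Real.log 2 * w := by rwa [div_le_iff₀' hlog] at hwlog
  have hexp : 1 + k * δ * Real.log 2 ≤ 2 ^ (k * δ) := by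
    rw [Real.rpow_def_of_pos two_pos]
    linarith [Real.add_one_le_exp (Real.log 2 * (k * δ))]
  have hk : (0 : ℝ) ≤ k := k.cast_nonneg
  have h1 : w + 1 ≤ C * w ^ 2 := by nlinarith
  have h2 : 1 ≤ C * δ * Real.log 2 * w ^ 2 := by nlinarith
  calc w + (k + 1) ≤ C * w ^ 2 + k * (C * δ * Real.log 2 * w ^ 2) := by
        nlinarith [mul_le_mul_of_nonneg_left h2 hk]
    _ = C * (1 + k * δ * Real.log 2) * w ^ 2 := by ring
    _ ≤ C * 2 ^ (k * δ) * w ^ 2 := by gcongr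

lemma eventually_forall_lt_and_rpow_add_le {c θ δ : ℝ} (Γ₀ : ℝ) (hc : 0 < c) (hθ : 0 < θ)
    (hδ : 0 < δ) :
    ∀ᶠ Γ in atTop, ∀ k : ℕ,
      Γ₀ < c * 2 ^ k * Γ ^ θ ∧ Γ ^ (θ * δ / 2) + (k + 1) ≤ (c * 2 ^ k * Γ ^ θ) ^ δ := by
  have hw : Tendsto (fun Γ : ℝ => Γ ^ (θ * δ / 2)) atTop atTop := tendsto_rpow_atTop (by positivity)
  have hcΓ : Tendsto (fun Γ : ℝ => c * Γ ^ θ) atTop atTop :=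
    (tendsto_rpow_atTop hθ).const_mul_atTop hc
  filter_upwards
    [hw.eventually (eventually_add_le_mul_two_rpow_mul_sq (Real.rpow_pos_of_pos hc δ) hδ),
      hcΓ.eventually_gt_atTop Γ₀, eventually_gt_atTop 0] with Γ hΓw hΓc hΓ k
  have h2k : (1 : ℝ) ≤ 2 ^ k := one_le_pow₀ one_le_two
  refine ⟨hΓc.trans_le ?_, ?_⟩
  · rw [mul_right_comm]
    exact le_mul_of_one_le_right (by positivity) h2k
  · convert hΓw k using 1
    rw [Real.mul_rpow (by positivity) (by positivity), Real.mul_rpow hc.le (by positivity),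
      ← Real.rpow_natCast, ← Real.rpow_mul zero_le_two, ← Real.rpow_natCast (Γ ^ _),
      ← Real.rpow_mul hΓ.le, ← Real.rpow_mul hΓ.le]
    norm_num

/-- The hypothesis `H` of the theorem: the exponential tail estimate at exponent `α`. -/
def SupTailEstimate {Ω : Type*} [MeasurableSpace Ω] (P : Measure Ω) (n : ℕ) (q α δ Γ₀ : ℝ)
    (u : Ω → ℝ × (Fin n → ℝ) → ℝ) : Prop :=
  ∀ r R : ℝ, 0 < r → r < R → R ≤ 1 → ∀ a > (0 : ℝ), ∀ Γ > Γ₀,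
    P {ω | supNorm n (pCyl n r (1, 0)) (u ω) > ENNReal.ofReal a ∧
        ENNReal.ofReal ((R - r) ^ (-((n : ℝ) / q + 2 / α))) *
          mixedNorm n α q (Set.Ioc (1 - R ^ 2) 1) (Metric.ball (0 : Fin n → ℝ) R) (u ω)
          ≤ ENNReal.ofReal (a / Γ)} ≤
      ENNReal.ofReal (Real.exp (-(Γ ^ δ / R ^ 2)))

namespace SupTailEstimate

variable {Ω : Type*} [MeasurableSpace Ω] {P : Measure Ω} {n : ℕ} {q α β δ Γ₀ : ℝ}
  {u : Ω → ℝ × (Fin n → ℝ) → ℝ}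

lemma measure_le (H : SupTailEstimate P n q α δ Γ₀ u) {r R a Γ : ℝ} (hr : 0 < r) (hrR : r < R)
    (hR : R ≤ 1) (ha : 0 < a) (hΓ : Γ₀ < Γ)
    {S T : Set Ω} (hST : ∀ ω ∈ S, ω ∉ T →
      ENNReal.ofReal ((R - r) ^ (-((n : ℝ) / q + 2 / α))) *
        mixedNorm n α q (Set.Ioc (1 - R ^ 2) 1) (Metric.ball (0 : Fin n → ℝ) R) (u ω)
        ≤ ENNReal.ofReal (a / Γ)) :
    P (S ∩ {ω | ENNReal.ofReal a < supNorm n (pCyl n r (1, 0)) (u ω)}) ≤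
      ENNReal.ofReal (Real.exp (-(Γ ^ δ / R ^ 2))) + P T := by
  refine (measure_mono ?_).trans <|
    (measure_union_le _ T).trans (add_le_add_left (H r R hr hrR hR a ha Γ hΓ) _)
  rintro ω ⟨hωS, hωa⟩
  by_cases hωT : ω ∈ T
  · exact Or.inr hωT
  · exact Or.inl ⟨hωa, hST ω hωS hωT⟩

lemma tendsto_measure_supNorm_gt [IsFiniteMeasure P] (H : SupTailEstimate P n q α δ Γ₀ u)
    (hδ : 0 < δ) (hu : Measurable (Function.uncurry u))
    (hfin : ∀ᵐ ω ∂P,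
      mixedNorm n α q (Set.Ioc (0 : ℝ) 1) (Metric.ball (0 : Fin n → ℝ) 1) (u ω) < ⊤)
    {ρ b : ℕ → ℝ} (hρ : ∀ N, 0 < ρ N) (hρ1 : ∀ N, ρ N < 1) (hb : ∀ N, 0 < b N)
    (hT : Tendsto (fun N => b N * (1 - ρ N) ^ ((n : ℝ) / q + 2 / α)) atTop atTop) :
    Tendsto (fun N => P {ω | ENNReal.ofReal (b N) < supNorm n (pCyl n (ρ N) (1, 0)) (u ω)})
      atTop (𝓝 0) := by
  set κ : ℝ := (n : ℝ) / q + 2 / α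
  set V : Ω → ℝ≥0∞ := fun ω =>
    mixedNorm n α q (Set.Ioc (1 - 1 ^ 2) 1) (Metric.ball (0 : Fin n → ℝ) 1) (u ω)
  have hVfin : ∀ᵐ ω ∂P, V ω < ⊤ := by simpa [V] using hfin
  -- Split at the level `L = √(b (1 - ρ)^κ)`, which makes the scaled norm bound read `b / L`.
  set L : ℕ → ℝ := fun N => √(b N * (1 - ρ N) ^ κ)
  have hL : Tendsto L atTop atTop := Real.tendsto_sqrt_atTop.comp hT
  have hsmall : ∀ᶠ N in atTop, P {ω | ENNReal.ofReal (b N) < supNorm n (pCyl n (ρ N) (1, 0)) (u ω)}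
      ≤ ENNReal.ofReal (Real.exp (-(L N ^ δ / 1 ^ 2))) + P {ω | ENNReal.ofReal (L N) < V ω} := by
    filter_upwards [hL.eventually_gt_atTop Γ₀, hL.eventually_gt_atTop 0] with N hΓN hLN
    have h1ρ : 0 < 1 - ρ N := sub_pos.2 (hρ1 N)
    have hscale : (1 - ρ N) ^ (-κ) * L N = b N / L N := by
      rw [Real.rpow_neg h1ρ.le, eq_div_iff hLN.ne', mul_assoc, ← sq,
        Real.sq_sqrt (mul_pos (hb N) (Real.rpow_pos_of_pos h1ρ κ)).le]
      field_simp [(Real.rpow_pos_of_pos h1ρ κ).ne']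
    have := H.measure_le (hρ N) (hρ1 N) le_rfl (hb N) hΓN (S := Set.univ)
      (T := {ω | ENNReal.ofReal (L N) < V ω}) fun ω _ hω => by
        rw [← hscale, ENNReal.ofReal_mul (Real.rpow_nonneg h1ρ.le _)]
        exact mul_le_mul_right (not_lt.1 hω) _
    simpa using this
  have hexp : Tendsto (fun N => ENNReal.ofReal (Real.exp (-(L N ^ δ / 1 ^ 2)))) atTop (𝓝 0) := by
    simpa using ENNReal.tendsto_ofReal
      (Real.tendsto_exp_neg_atTop_nhds_zero.comp ((tendsto_rpow_atTop hδ).comp hL))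
  have hVtail := (tendsto_measure_ofReal_lt_of_ae_lt_top
    (measurable_mixedNorm hu α q _ _) hVfin).comp hL
  have hupper := hexp.add hVtail
  rw [add_zero] at hupper
  exact tendsto_of_tendsto_of_tendsto_of_le_of_le' tendsto_const_nhds hupper
    (Eventually.of_forall fun N => zero_le) hsmall

lemma measure_inter_supNorm_gt_le (H : SupTailEstimate P n q α δ Γ₀ u)
    (hu : Measurable (Function.uncurry u)) (hq : 0 < q) (hβ : 0 < β) (hβα : β ≤ α) {S : Set Ω}
    {ρ ρ' τ b b' Γ M D : ℝ} (hρ : 0 < ρ) (hρρ' : ρ < ρ') (hρ'τ : ρ' ≤ τ) (hρ'1 : ρ' ≤ 1)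
    (hb : 0 < b) (hb' : 0 ≤ b') (hM : 0 ≤ M) (hD : (2 * ρ') ^ n ≤ D) (hΓ : Γ₀ < Γ)
    (hS : ∀ ω ∈ S,
      mixedNorm n β q (Set.Ioc (1 - τ ^ 2) 1) (Metric.ball 0 τ) (u ω) ≤ ENNReal.ofReal M)
    (hgap : (ρ' - ρ) ^ (-((n : ℝ) / q + 2 / α)) *
      ((b' ^ q * D) ^ ((α - β) / q) * M ^ β) ^ (1 / α) ≤ b / Γ) :
    P (S ∩ {ω | ENNReal.ofReal b < supNorm n (pCyl n ρ (1, 0)) (u ω)}) ≤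
      ENNReal.ofReal (Real.exp (-(Γ ^ δ / ρ' ^ 2))) +
        P (S ∩ {ω | ENNReal.ofReal b' < supNorm n (pCyl n ρ' (1, 0)) (u ω)}) := by
  refine H.measure_le hρ hρρ' hρ'1 hb hΓ fun ω hωS hωT => ?_
  have hsup : supNorm n (pCyl n ρ' (1, 0)) (u ω) ≤ ENNReal.ofReal b' :=
    not_lt.1 fun h => hωT ⟨hωS, h⟩
  have hgap₀ : 0 ≤ (ρ' - ρ) ^ (-((n : ℝ) / q + 2 / α)) := Real.rpow_nonneg (by linarith) _
  calc _ ≤ ENNReal.ofReal ((ρ' - ρ) ^ (-((n : ℝ) / q + 2 / α))) *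
        ENNReal.ofReal (((b' ^ q * D) ^ ((α - β) / q) * M ^ β) ^ (1 / α)) :=
        mul_le_mul_right (mixedNorm_cyl_le_of_supNorm_le (hu.of_uncurry_left) hq hβ hβα
          (hρ.trans hρρ') hρ'τ hb' hM hD hsup (hS ω hωS)) _
    _ ≤ ENNReal.ofReal (b / Γ) := by
        rw [← ENNReal.ofReal_mul hgap₀]
        exact ENNReal.ofReal_le_ofReal hgap

lemma measure_le_of_lower_exponent_bound [IsFiniteMeasure P]
    (H : SupTailEstimate P n q α δ Γ₀ u) (hδ : 0 < δ)
    (hu : Measurable (Function.uncurry u))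
    (hfin : ∀ᵐ ω ∂P,
      mixedNorm n α q (Set.Ioc (0 : ℝ) 1) (Metric.ball (0 : Fin n → ℝ) 1) (u ω) < ⊤)
    (hq : 0 < q) (hα : 0 < α) (hβ : 0 < β) (hβα : β < α) {Λ r a Γ : ℝ} (hΛ : 0 < Λ)
    (hΛβ : Λ ^ (β / α) = 2 ^ ((n : ℝ) / q + 2 / α + 1)) (hr : 0 < r) (hr2 : r ≤ 1 / 2)
    (ha : 0 < a) (hΓ : 0 < Γ)
    (hΓk : ∀ k : ℕ,
      Γ₀ < 2 * 4 ^ (-((n : ℝ) / q) * (1 - β / α)) / Λ * 2 ^ k * Γ ^ (β / α) ∧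
        Γ ^ (β / α * δ / 2) + (k + 1) ≤
          (2 * 4 ^ (-((n : ℝ) / q) * (1 - β / α)) / Λ * 2 ^ k * Γ ^ (β / α)) ^ δ)
    {E : Set Ω} (hE : ∀ ω ∈ E, ENNReal.ofReal a < supNorm n (pCyl n r (1, 0)) (u ω) ∧
      mixedNorm n β q (Set.Ioc (1 - (2 * r) ^ 2) 1) (Metric.ball 0 (2 * r)) (u ω)
        ≤ ENNReal.ofReal (r ^ ((n : ℝ) / q + 2 / β) * (a / Γ))) :
    P E ≤ ENNReal.ofReal (Real.exp (-(Γ ^ (β / α * δ / 2) / (4 * r ^ 2)))) := by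
  set R : ℕ → ℝ := fun k => r * (2 - (1 / 2) ^ k)
  have hR : ∀ k, 0 < R k ∧ R k < 2 * r := fun k => by
    have : (0 : ℝ) < (1 / 2) ^ k := by positivity
    have : ((1 : ℝ) / 2) ^ k ≤ 1 := pow_le_one₀ (by norm_num) (by norm_num)
    constructor <;> nlinarith
  have hRgap : ∀ k, R (k + 1) - R k = r * (1 / 2) ^ (k + 1) := fun k => by
    simp only [R, pow_succ]; ring
  set F : ℕ → Set Ω := fun k =>
    E ∩ {ω | ENNReal.ofReal (a * Λ ^ k) < supNorm n (pCyl n (R k) (1, 0)) (u ω)}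
  have hstep : ∀ k, P (F k) ≤
      ENNReal.ofReal (Real.exp (-(Γ ^ (β / α * δ / 2) / (4 * r ^ 2)))) * 2⁻¹ ^ (k + 1) +
        P (F (k + 1)) := fun k => by
    have hRk : R k < R (k + 1) := by linarith [hRgap k, (by positivity : 0 < r * (1 / 2) ^ (k + 1))]
    have hD : (2 * R (k + 1)) ^ n ≤ (4 * r) ^ n :=
      pow_le_pow_left₀ (by linarith [(hR (k + 1)).1]) (by linarith [(hR (k + 1)).2]) n
    refine (H.measure_inter_supNorm_gt_le (b' := a * Λ ^ (k + 1)) hu hq hβ hβα.le (hR k).1 hRk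
      (hR (k + 1)).2.le (by linarith [(hR (k + 1)).2]) (by positivity) (by positivity)
      (by positivity) hD (hΓk k).1 (fun ω hω => (hE ω hω).2) ?_).trans <| add_le_add_left
        (ofReal_exp_neg_div_sq_le (by positivity) (hR (k + 1)).1 (hR (k + 1)).2.le hr2 (hΓk k).2) _
    rw [hRgap, gap_rpow_mul_interpolation_eq hq hα hβ hr ha hΓ hΛ hΛβ]
  have htail : Tendsto (fun N => P (F N)) atTop (𝓝 0) := by
    refine tendsto_of_tendsto_of_tendsto_of_le_of_le tendsto_const_nhds
      (H.tendsto_measure_supNorm_gt hδ hu hfin (fun N => (hR N).1)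
        (fun N => by linarith [(hR N).2]) (fun N => by positivity) ?_)
      (fun N => zero_le) (fun N => measure_mono Set.inter_subset_right)
    have hκ : 0 ≤ (n : ℝ) / q + 2 / α := by positivity
    have hΛ2 := two_rpow_add_one_le_of_rpow_eq hΛ (by positivity) ((div_le_one hα).2 hβα.le) hκ hΛβ
    exact tendsto_mul_pow_mul_rpow_atTop hκ hr hr2 ha hΛ2
  have hR0 : R 0 = r := by norm_num [R]
  calc P E ≤ P (F 0) := measure_mono fun ω hω => ⟨hω, by simpa [F, hR0] using (hE ω hω).1⟩
    _ ≤ _ := ENNReal.le_tsum_of_le_add_succ hstep htail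
    _ = _ := ENNReal.tsum_mul_inv_two_pow_succ _

end SupTailEstimate

theorem exponent_reduction_time_general
    {Ω : Type*} [MeasurableSpace Ω] (P : Measure Ω) [IsProbabilityMeasure P]
    (n : ℕ) (q α β : ℝ) (hq : 0 < q) (hα : 0 < α)
    (hβ₁ : α / 2 < β) (hβ₂ : β < α)
    (u : Ω → ℝ × (Fin n → ℝ) → ℝ) (hu : Measurable (Function.uncurry u))
    (hfin : ∀ᵐ ω ∂P,
      mixedNorm n α q (Set.Ioc (0 : ℝ) 1) (Metric.ball (0 : Fin n → ℝ) 1) (u ω) < ⊤)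
    (δα Γα : ℝ) (hδα : 0 < δα)
    (H : ∀ r R : ℝ, 0 < r → r < R → R ≤ 1 → ∀ a > (0 : ℝ), ∀ Γ > Γα,
      P {ω | supNorm n (pCyl n r (1, 0)) (u ω) > ENNReal.ofReal a ∧
          ENNReal.ofReal ((R - r) ^ (-((n : ℝ) / q + 2 / α))) *
            mixedNorm n α q (Set.Ioc (1 - R ^ 2) 1) (Metric.ball (0 : Fin n → ℝ) R) (u ω)
            ≤ ENNReal.ofReal (a / Γ)} ≤
        ENNReal.ofReal (Real.exp (-(Γ ^ δα / R ^ 2)))) :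
    ∃ δβ > (0 : ℝ), ∃ Γβ ≥ (1 : ℝ), ∀ Γ > Γβ, ∀ a > (0 : ℝ), ∀ r : ℝ, 0 < r → r ≤ 1 / 2 →
      P {ω | supNorm n (pCyl n r (1, 0)) (u ω) > ENNReal.ofReal a ∧
          ENNReal.ofReal (r ^ (-((n : ℝ) / q + 2 / β))) *
            mixedNorm n β q (Set.Ioc (1 - (2 * r) ^ 2) 1)
              (Metric.ball (0 : Fin n → ℝ) (2 * r)) (u ω)
            ≤ ENNReal.ofReal (a / Γ)} ≤
        ENNReal.ofReal (Real.exp (-(Γ ^ δβ / (4 * r ^ 2)))) := by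
  have hβ : 0 < β := by linarith
  set Λ : ℝ := 2 ^ (((n : ℝ) / q + 2 / α + 1) / (β / α))
  have hΛβ : Λ ^ (β / α) = 2 ^ ((n : ℝ) / q + 2 / α + 1) := by
    rw [← Real.rpow_mul zero_le_two, div_mul_cancel₀ _ (by positivity)]
  obtain ⟨Γ₁, hΓ₁⟩ := eventually_atTop.1 <|
    eventually_forall_lt_and_rpow_add_le Γα
      (by positivity : 0 < 2 * 4 ^ (-((n : ℝ) / q) * (1 - β / α)) / Λ)
      (by positivity : 0 < β / α) hδα
  refine ⟨β / α * δα / 2, by positivity, max 1 Γ₁, le_max_left _ _,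
    fun Γ hΓ a ha r hr hr2 => ?_⟩
  exact SupTailEstimate.measure_le_of_lower_exponent_bound H hδα hu hfin hq hα hβ hβ₂
    (by positivity) hΛβ hr hr2 ha (by linarith [le_max_left 1 Γ₁])
    (hΓ₁ Γ ((le_max_right _ _).trans hΓ.le))
    fun ω hω => ⟨hω.1, le_ofReal_rpow_mul_of_ofReal_rpow_neg_mul_le hr hω.2⟩

/-- Exponent reduction in time. -/
theorem exponent_reduction_time
    {Ω : Type*} [MeasurableSpace Ω] (P : Measure Ω) [IsProbabilityMeasure P]
    (n : ℕ) (hn : 1 ≤ n) (q α β : ℝ) (hq : 0 < q) (hα : 0 < α)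
    (hβ₁ : α / 2 < β) (hβ₂ : β < α)
    (u : Ω → ℝ × (Fin n → ℝ) → ℝ) (hu : Measurable (Function.uncurry u))
    (hfin : ∀ᵐ ω ∂P,
      mixedNorm n α q (Set.Ioc (0 : ℝ) 1) (Metric.ball (0 : Fin n → ℝ) 1) (u ω) < ⊤)
    (δα Γα : ℝ) (hδα : 0 < δα) (hΓα : 1 ≤ Γα)
    (H : ∀ r R : ℝ, 0 < r → r < R → R ≤ 1 → ∀ a > (0 : ℝ), ∀ Γ > Γα,
      P {ω | supNorm n (pCyl n r (1, 0)) (u ω) > ENNReal.ofReal a ∧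
          ENNReal.ofReal ((R - r) ^ (-((n : ℝ) / q + 2 / α))) *
            mixedNorm n α q (Set.Ioc (1 - R ^ 2) 1) (Metric.ball (0 : Fin n → ℝ) R) (u ω)
            ≤ ENNReal.ofReal (a / Γ)} ≤
        ENNReal.ofReal (Real.exp (-(Γ ^ δα / R ^ 2)))) :
    ∃ δβ > (0 : ℝ), ∃ Γβ ≥ (1 : ℝ), ∀ Γ > Γβ, ∀ a > (0 : ℝ), ∀ r : ℝ, 0 < r → r ≤ 1 / 2 →
      P {ω | supNorm n (pCyl n r (1, 0)) (u ω) > ENNReal.ofReal a ∧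
          ENNReal.ofReal (r ^ (-((n : ℝ) / q + 2 / β))) *
            mixedNorm n β q (Set.Ioc (1 - (2 * r) ^ 2) 1)
              (Metric.ball (0 : Fin n → ℝ) (2 * r)) (u ω)
            ≤ ENNReal.ofReal (a / Γ)} ≤
        ENNReal.ofReal (Real.exp (-(Γ ^ δβ / (4 * r ^ 2)))) :=
  exponent_reduction_time_general P n q α β hq hα hβ₁ hβ₂ u hu hfin δα Γα hδα H
end
end

section
/- Exponent reduction in space. Fix a dimension n ≥ 1, exponents p > 0, α > 0 and β ∈ (α/2, α), and let u : Ω × Q₁ → ℝ be jointly measurable with ‖u‖_{p,α,Q₁} < ∞ almost surely. Suppose there exist constants δ(α) > 0 and Γ(α) ≥ 1 such that for all 0 < r < R ≤ 1, all a > 0 and all Γ > Γ(α), P( ‖u‖_{∞,Q_r} > a and (R−r)^{−(n/α+2/p)}·‖u‖_{p,α,Q_R} ≤ a/Γ ) ≤ exp(−Γ^{δ(α)}/R²). Then there exist constants δ(β) > 0 and Γ(β) ≥ 1, depending only on n, p, α, β, δ(α) and Γ(α), such that for all Γ > Γ(β), all a > 0 and all 0 < r ≤ 1/2, P( ‖u‖_{∞,Q_r}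 > a and r^{−(n/β+2/p)}·‖u‖_{p,β,Q_{2r}} ≤ a/Γ ) ≤ exp(−Γ^{δ(β)}/(4r²)). -/
open MeasureTheory
open scoped ENNReal

noncomputable section

/-!
Interpolation in space, `‖u‖_{p,α} ≤ ‖u‖_∞^{1-β/α} |I|^{(1-β/α)/p} ‖u‖_{p,β}^{β/α}` on a
cylinder `I × B`, turns smallness of the `β`-norm into smallness of the `α`-norm, at the price
of a power of the sup norm on the same cylinder. To pay for it, take radii
`r = ρ₀ < ρ₁ < ⋯ ↑ 3r/2` and levels `M^k a`. The sup norm on `Q_{3r/2}` is a.s. finite (the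
`α`-hypothesis between `3r/2` and `1` with `Γ → ∞`, as `‖u‖_{p,α,Q₁} < ∞` a.s.), so if `‖u‖_{∞,Q_r} > a` there is a `k`
with `‖u‖_{∞,Q_{ρ_k}} > M^k a` but `‖u‖_{∞,Q_{ρ_{k+1}}} ≤ M^{k+1} a`. On that event the
interpolated `α`-norm on `Q_{ρ_{k+1}}` is small enough to apply the `α`-hypothesis between
`ρ_k` and `ρ_{k+1}` with `Γ_k = Γ^{β/α} 2^k / C`; the bounds `exp(-Γ_k^{δ(α)} / ρ_{k+1}²)`
decay doubly exponentially in `k` and sum to at most `exp(-Γ^{δ(β)} / (4r²))` with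
`δ(β) = (β/α) δ(α) / 2`, once `Γ` is large.
-/

open Filter Topology

lemma mixedNorm_mono {n : ℕ} {p q : ℝ} (hp : 0 < p) (hq : 0 < q)
    {I I' : Set ℝ} {B B' : Set (Fin n → ℝ)} (hI : I ⊆ I') (hB : B ⊆ B')
    (h : ℝ × (Fin n → ℝ) → ℝ) :
    mixedNorm n p q I B h ≤ mixedNorm n p q I' B' h := by
  refine ENNReal.rpow_le_rpow ?_ (by positivity)
  refine (lintegral_mono fun t => ?_).trans (lintegral_mono_set hI)
  exact ENNReal.rpow_le_rpow (lintegral_mono_set hB) (by positivity)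

lemma supNorm_mono {n : ℕ} {D D' : Set (ℝ × (Fin n → ℝ))} (hD : D ⊆ D')
    (h : ℝ × (Fin n → ℝ) → ℝ) : supNorm n D h ≤ supNorm n D' h :=
  essSup_mono_measure (Measure.absolutelyContinuous_of_le (Measure.restrict_mono hD le_rfl))

lemma pCyl_mono {n : ℕ} {r r' : ℝ} (h0 : 0 ≤ r) (h : r ≤ r') (c : ℝ × (Fin n → ℝ)) :
    pCyl n r c ⊆ pCyl n r' c :=
  Set.prod_mono (Set.Ioc_subset_Ioc (by nlinarith) le_rfl) (Metric.ball_subset_ball h)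

lemma ae_ae_le_supNorm {n : ℕ} (I : Set ℝ) (B : Set (Fin n → ℝ)) (v : ℝ × (Fin n → ℝ) → ℝ) :
    ∀ᵐ t ∂volume.restrict I, ∀ᵐ x ∂volume.restrict B,
      ENNReal.ofReal |v (t, x)| ≤ supNorm n (I ×ˢ B) v := by
  have h : ∀ᵐ z ∂(volume.restrict I).prod (volume.restrict B),
      ENNReal.ofReal |v z| ≤ supNorm n (I ×ˢ B) v := by
    rw [Measure.prod_restrict, ← Measure.volume_eq_prod]
    exact ENNReal.ae_le_essSup _
  exact Measure.ae_ae_of_ae_prod h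

lemma lintegral_rpow_le_of_ae_le {X : Type*} [MeasurableSpace X] {μ : Measure X}
    {f : X → ℝ≥0∞} {S : ℝ≥0∞} (hf : Measurable f) (hfS : ∀ᵐ x ∂μ, f x ≤ S)
    {α β : ℝ} (hβ : 0 ≤ β) (hβα : β ≤ α) :
    ∫⁻ x, f x ^ α ∂μ ≤ S ^ (α - β) * ∫⁻ x, f x ^ β ∂μ := by
  rw [← lintegral_const_mul _ (hf.pow_const β)]
  refine lintegral_mono_ae (hfS.mono fun x hx => ?_)
  calc f x ^ α = f x ^ (α - β) * f x ^ β := by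
        rw [← ENNReal.rpow_add_of_nonneg _ _ (sub_nonneg.2 hβα) hβ, sub_add_cancel]
    _ ≤ S ^ (α - β) * f x ^ β := by gcongr

lemma lintegral_rpow_le_rpow_lintegral_mul {X : Type*} [MeasurableSpace X] {μ : Measure X}
    {F : X → ℝ≥0∞} (hF : AEMeasurable F μ) {θ : ℝ} (hθ0 : 0 < θ) (hθ1 : θ ≤ 1) :
    ∫⁻ x, F x ^ θ ∂μ ≤ (∫⁻ x, F x ∂μ) ^ θ * μ Set.univ ^ (1 - θ) := by
  have h := eLpNorm'_le_eLpNorm'_mul_rpow_measure_univ hθ0 hθ1 hF.aestronglyMeasurable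
  simp only [eLpNorm'_eq_lintegral_enorm, enorm_eq_self, ENNReal.rpow_one, div_one] at h
  calc ∫⁻ x, F x ^ θ ∂μ = ((∫⁻ x, F x ^ θ ∂μ) ^ (1 / θ)) ^ θ := by
        rw [← ENNReal.rpow_mul, one_div_mul_cancel hθ0.ne', ENNReal.rpow_one]
    _ ≤ ((∫⁻ x, F x ∂μ) * μ Set.univ ^ (1 / θ - 1)) ^ θ := by gcongr
    _ = (∫⁻ x, F x ∂μ) ^ θ * μ Set.univ ^ (1 - θ) := by
        rw [ENNReal.mul_rpow_of_nonneg _ _ hθ0.le, ← ENNReal.rpow_mul]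
        congr 2
        field_simp

lemma lintegral_rpow_le_of_ae_le_const_mul {X : Type*} [MeasurableSpace X] {μ : Measure X}
    {f g : X → ℝ≥0∞} (hg : Measurable g) {c : ℝ≥0∞} (hfg : ∀ᵐ x ∂μ, f x ≤ c * g x)
    {p α β : ℝ} (hp : 0 < p) (hβ : 0 < β) (hβα : β ≤ α) :
    ∫⁻ x, f x ^ (p / α) ∂μ ≤
      c ^ (p / α) * ((∫⁻ x, g x ^ (p / β) ∂μ) ^ (β / α) * μ Set.univ ^ (1 - β / α)) := by
  have hα : 0 < α := hβ.trans_le hβα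
  have hpow : ∀ y : ℝ≥0∞, (y ^ (p / β)) ^ (β / α) = y ^ (p / α) := fun y => by
    rw [← ENNReal.rpow_mul]
    congr 1
    field_simp
  calc ∫⁻ x, f x ^ (p / α) ∂μ ≤ ∫⁻ x, c ^ (p / α) * (g x ^ (p / β)) ^ (β / α) ∂μ := by
        refine lintegral_mono_ae (hfg.mono fun x hx => ?_)
        rw [hpow, ← ENNReal.mul_rpow_of_nonneg _ _ (by positivity)]
        gcongr
    _ = c ^ (p / α) * ∫⁻ x, (g x ^ (p / β)) ^ (β / α) ∂μ :=
        lintegral_const_mul _ ((hg.pow_const _).pow_const _)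
    _ ≤ _ := by
        gcongr
        exact lintegral_rpow_le_rpow_lintegral_mul (hg.pow_const _).aemeasurable
          (by positivity) ((div_le_one hα).2 hβα)

lemma mixedNorm_le_supNorm_rpow_mul {n : ℕ} {p α β : ℝ} (hp : 0 < p) (hβ : 0 < β)
    (hβα : β ≤ α) {v : ℝ × (Fin n → ℝ) → ℝ} (hv : Measurable v) (I : Set ℝ)
    (B : Set (Fin n → ℝ)) :
    mixedNorm n p α I B v ≤ supNorm n (I ×ˢ B) v ^ (1 - β / α) *
      volume I ^ ((1 - β / α) / p) * mixedNorm n p β I B v ^ (β / α) := by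
  have hα : 0 < α := hβ.trans_le hβα
  set S := supNorm n (I ×ˢ B) v
  have hslice : ∀ᵐ t ∂volume.restrict I, ∫⁻ x in B, ENNReal.ofReal (|v (t, x)| ^ α) ≤
      S ^ (α - β) * ∫⁻ x in B, ENNReal.ofReal (|v (t, x)| ^ β) := by
    filter_upwards [ae_ae_le_supNorm I B v] with t ht
    simp only [← ENNReal.ofReal_rpow_of_nonneg (abs_nonneg _) hα.le,
      ← ENNReal.ofReal_rpow_of_nonneg (abs_nonneg _) hβ.le]
    exact lintegral_rpow_le_of_ae_le (hv.comp measurable_prodMk_left).abs.ennreal_ofReal ht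
      hβ.le hβα
  have htime := lintegral_rpow_le_of_ae_le_const_mul
    (Measurable.lintegral_prod_right' (f := fun z => ENNReal.ofReal (|v z| ^ β))
      (hv.abs.pow_const β).ennreal_ofReal) hslice hp hβ hβα
  rw [Measure.restrict_apply_univ] at htime
  calc mixedNorm n p α I B v ≤ ((S ^ (α - β)) ^ (p / α) *
        ((∫⁻ t in I, (∫⁻ x in B, ENNReal.ofReal (|v (t, x)| ^ β)) ^ (p / β)) ^ (β / α) *
          volume I ^ (1 - β / α))) ^ (1 / p) :=
        ENNReal.rpow_le_rpow htime (by positivity)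
    _ = S ^ (1 - β / α) * volume I ^ ((1 - β / α) / p) * mixedNorm n p β I B v ^ (β / α) := by
        rw [mixedNorm, ENNReal.mul_rpow_of_nonneg _ _ (by positivity),
          ENNReal.mul_rpow_of_nonneg _ _ (by positivity), ← ENNReal.rpow_mul,
          ← ENNReal.rpow_mul, ← ENNReal.rpow_mul, ← ENNReal.rpow_mul, ← ENNReal.rpow_mul,
          mul_comm (β / α), mul_comm (_ ^ _) (volume I ^ _), ← mul_assoc]
        congr 3 <;> field_simp

lemma exists_lt_and_succ_le {γ : Type*} [LinearOrder γ] {s b : ℕ → γ} (h0 : b 0 < s 0)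
    (h : ∃ k, s k ≤ b k) : ∃ k, b k < s k ∧ s (k + 1) ≤ b (k + 1) := by
  classical
  obtain ⟨k, hk⟩ : ∃ k, Nat.find h = k + 1 :=
    Nat.exists_eq_succ_of_ne_zero fun h' => h0.not_ge ((Nat.find_eq_zero h).1 h')
  exact ⟨k, lt_of_not_ge (Nat.find_min h (by omega)), hk ▸ Nat.find_spec h⟩

lemma measure_eq_top_eq_zero_of_tail_bound {Ω : Type*} [MeasurableSpace Ω] {P : Measure Ω}
    {X Y : Ω → ℝ≥0∞} (hY : ∀ᵐ ω ∂P, Y ω < ⊤) {ε : ℝ → ℝ≥0∞} (hε : Tendsto ε atTop (𝓝 0))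
    {Γ₀ : ℝ} (hXY : ∀ a > (0 : ℝ), ∀ Γ > Γ₀,
      P {ω | ENNReal.ofReal a < X ω ∧ Y ω ≤ ENNReal.ofReal (a / Γ)} ≤ ε Γ) :
    P {ω | X ω = ⊤} = 0 := by
  have hlevel : ∀ m : ℕ, P {ω | X ω = ⊤ ∧ Y ω ≤ m} = 0 := by
    refine fun m => le_antisymm (ge_of_tendsto hε ?_) zero_le
    filter_upwards [eventually_gt_atTop (max Γ₀ 0)] with Γ hΓ
    have hΓ0 : 0 < Γ := (le_max_right _ _).trans_lt hΓ
    refine le_trans (measure_mono ?_)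
      (hXY (Γ * (m + 1)) (by positivity) Γ ((le_max_left _ _).trans_lt hΓ))
    rintro ω ⟨hX, hYm⟩
    refine ⟨by simp [hX], ?_⟩
    rw [mul_div_cancel_left₀ _ hΓ0.ne', ENNReal.ofReal_add (by positivity) zero_le_one,
      ENNReal.ofReal_natCast]
    exact hYm.trans le_self_add
  refine measure_mono_null_ae (hY.mono fun ω hω hX => ?_) (measure_iUnion_null hlevel)
  obtain ⟨m, hm⟩ := ENNReal.exists_nat_gt hω.ne
  exact Set.mem_iUnion.2 ⟨m, hX, hm.le⟩

lemma exp_neg_mul_pow_div_le {G q s : ℝ} (hG : 0 ≤ G) (hq : 1 ≤ q) (hs : 0 ≤ s) (k : ℕ) :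
    Real.exp (-(G * q ^ k / s)) ≤ Real.exp (-(G / s)) * Real.exp (-(G * (q - 1) / s)) ^ k := by
  rw [← Real.exp_nat_mul, ← Real.exp_add, Real.exp_le_exp]
  have hBernoulli : G * (1 + k * (q - 1)) ≤ G * q ^ k := by
    gcongr
    simpa using one_add_mul_le_pow (by linarith : (-2 : ℝ) ≤ q - 1) k
  have hsplit : -(G / s) + k * -(G * (q - 1) / s) = -(G * (1 + k * (q - 1)) / s) := by ring
  rw [hsplit, neg_le_neg_iff]
  gcongr

lemma tsum_ofReal_exp_neg_geometric_le {G q s : ℝ} (hq : 1 < q) (hs : 0 < s) (hs1 : s ≤ 1)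
    (hG : Real.log 2 ≤ G * (q - 1)) :
    ∑' k : ℕ, ENNReal.ofReal (Real.exp (-(G * q ^ k / s))) ≤
      ENNReal.ofReal (Real.exp (-((G - Real.log 2) / s))) := by
  have hlog2 : 0 < Real.log 2 := Real.log_pos one_lt_two
  have hG0 : 0 < G := pos_of_mul_pos_left (hlog2.trans_le hG) (by linarith)
  set x := ENNReal.ofReal (Real.exp (-(G * (q - 1) / s)))
  have hx : x ≤ 2⁻¹ := by
    rw [← ENNReal.ofReal_ofNat, ← ENNReal.ofReal_inv_of_pos two_pos,
      ← Real.exp_log (inv_pos.2 two_pos), Real.log_inv]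
    refine ENNReal.ofReal_le_ofReal (Real.exp_le_exp.2 (neg_le_neg ?_))
    exact hG.trans (le_div_self (by positivity) hs hs1)
  have hratio : (1 - x)⁻¹ ≤ ENNReal.ofReal (Real.exp (Real.log 2 / s)) := by
    rw [ENNReal.inv_le_iff_inv_le]
    refine le_trans ?_ (tsub_le_tsub_left hx 1)
    rw [ENNReal.one_sub_inv_two, ← ENNReal.ofReal_ofNat, ← Real.exp_log two_pos, Real.log_exp]
    exact ENNReal.inv_le_inv.2 (ENNReal.ofReal_le_ofReal
      (Real.exp_le_exp.2 (le_div_self hlog2.le hs hs1)))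
  calc ∑' k : ℕ, ENNReal.ofReal (Real.exp (-(G * q ^ k / s)))
      ≤ ∑' k : ℕ, ENNReal.ofReal (Real.exp (-(G / s))) * x ^ k := by
        refine ENNReal.tsum_le_tsum fun k => ?_
        rw [← ENNReal.ofReal_pow (by positivity), ← ENNReal.ofReal_mul (by positivity)]
        exact ENNReal.ofReal_le_ofReal (exp_neg_mul_pow_div_le hG0.le hq.le hs.le k)
    _ = ENNReal.ofReal (Real.exp (-(G / s))) * (1 - x)⁻¹ := by
        rw [ENNReal.tsum_mul_left, ENNReal.tsum_geometric]
    _ ≤ ENNReal.ofReal (Real.exp (-(G / s))) * ENNReal.ofReal (Real.exp (Real.log 2 / s)) := by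
        gcongr
    _ = ENNReal.ofReal (Real.exp (-((G - Real.log 2) / s))) := by
        rw [← ENNReal.ofReal_mul (Real.exp_pos _).le, ← Real.exp_add]
        ring_nf

lemma eventually_tail_conditions {θ δ C : ℝ} (hθ : 0 < θ) (hδ : 0 < δ) (hC : 0 < C) (Γ₀ : ℝ) :
    ∀ᶠ Γ in atTop, C * Γ₀ < Γ ^ θ ∧ Real.log 2 ≤ (Γ ^ θ / C) ^ δ * (2 ^ δ - 1) ∧
      Γ ^ (θ * δ / 2) ≤ (Γ ^ θ / C) ^ δ - Real.log 2 := by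
  have hq : 0 < (2 : ℝ) ^ δ - 1 := sub_pos.2 (Real.one_lt_rpow one_lt_two hδ)
  have hT := tendsto_rpow_atTop (by positivity : 0 < θ * δ / 2)
  filter_upwards [(tendsto_rpow_atTop hθ).eventually_gt_atTop (C * Γ₀), eventually_ge_atTop 0,
    hT.eventually_ge_atTop (2 * C ^ δ), hT.eventually_ge_atTop (Real.log 2),
    hT.eventually_ge_atTop (Real.log 2 / (2 ^ δ - 1))] with Γ hΓ₀ hΓ hTC hTlog hTq
  set T := Γ ^ (θ * δ / 2)
  have hG : (Γ ^ θ / C) ^ δ = T ^ 2 / C ^ δ := by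
    rw [Real.div_rpow (by positivity) hC.le, ← Real.rpow_mul hΓ, ← Real.rpow_natCast,
      ← Real.rpow_mul hΓ]
    ring_nf
  have h2T : 2 * T ≤ (Γ ^ θ / C) ^ δ := by
    rw [hG, le_div_iff₀ (by positivity)]
    nlinarith [Real.rpow_pos_of_pos hC δ]
  refine ⟨hΓ₀, ?_, by linarith⟩
  calc Real.log 2 = Real.log 2 / (2 ^ δ - 1) * (2 ^ δ - 1) := by field_simp
    _ ≤ (Γ ^ θ / C) ^ δ * (2 ^ δ - 1) := by
        gcongr
        nlinarith [Real.rpow_pos_of_pos hC δ]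

namespace ExponentReduction

variable (n : ℕ) (p α β : ℝ)

def scaleExp (q : ℝ) : ℝ := n / q + 2 / p

/-- `M` with `M ^ (β / α) = 2 ^ (scaleExp n p α + 1)`: this makes the growth `M^k` of the
levels and the shrinking `2^{-k}` of the gaps cancel in `rescaled_bound_eq`. -/
def jumpFactor : ℝ := 2 ^ ((scaleExp n p α + 1) / (β / α))

def gammaConst : ℝ :=
  jumpFactor n p α β ^ (1 - β / α) * 4 ^ scaleExp n p α * (3 / 2) ^ (2 * (1 - β / α) / p)

lemma one_lt_jumpFactor (hp : 0 < p) (hα : 0 < α) (hβ : 0 < β) : 1 < jumpFactor n p α β :=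
  Real.one_lt_rpow one_lt_two (by unfold scaleExp; positivity)

lemma gammaConst_pos : 0 < gammaConst n p α β := by
  unfold gammaConst jumpFactor
  positivity

/-- After taking logarithms this is linear; the powers of `r` cancel because
`scaleExp n p α = (β / α) * scaleExp n p β + 2 * (1 - β / α) / p`. -/
lemma rescaled_bound_eq (hp : 0 < p) (hα : 0 < α) (hβ : 0 < β) {r a Γ : ℝ} (hr : 0 < r)
    (ha : 0 < a) (hΓ : 0 < Γ) (k : ℕ) :
    (r * (1 / 2) ^ (k + 2)) ^ (-scaleExp n p α) *
      ((jumpFactor n p α β ^ (k + 1) * a) ^ (1 - β / α) *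
        ((3 * r / 2) ^ 2) ^ ((1 - β / α) / p) * (a * r ^ scaleExp n p β / Γ) ^ (β / α)) =
      jumpFactor n p α β ^ k * a / (Γ ^ (β / α) * 2 ^ k / gammaConst n p α β) := by
  have hM := (zero_lt_one.trans (one_lt_jumpFactor n p α β hp hα hβ))
  have hC := gammaConst_pos n p α β
  refine Real.log_injOn_pos (Set.mem_Ioi.2 (by positivity)) (Set.mem_Ioi.2 (by positivity)) ?_
  simp (disch := positivity) only [Real.log_mul, Real.log_div, Real.log_rpow, Real.log_pow,
    one_div, Real.log_inv]
  simp (disch := positivity) only [gammaConst, jumpFactor, Real.log_mul, Real.log_rpow, scaleExp]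
  have h4 : Real.log 4 = 2 * Real.log 2 := by
    rw [show (4 : ℝ) = 2 ^ 2 by norm_num, Real.log_pow, Nat.cast_ofNat]
  rw [h4, Real.log_div (by norm_num) (by norm_num)]
  field_simp
  push_cast
  ring

def chainRadius (r : ℝ) (k : ℕ) : ℝ := r * (3 - (1 / 2) ^ k) / 2

variable {r : ℝ}

lemma chainRadius_zero : chainRadius r 0 = r := by
  norm_num [chainRadius]

lemma chainRadius_pos (hr : 0 < r) (k : ℕ) : 0 < chainRadius r k := by
  have : ((1 : ℝ) / 2) ^ k ≤ 1 := pow_le_one₀ (by norm_num) (by norm_num)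
  unfold chainRadius
  nlinarith

lemma chainRadius_le (hr : 0 ≤ r) (k : ℕ) : chainRadius r k ≤ 3 * r / 2 := by
  have : (0 : ℝ) ≤ (1 / 2) ^ k := by positivity
  unfold chainRadius
  nlinarith

lemma chainRadius_succ_sub (k : ℕ) :
    chainRadius r (k + 1) - chainRadius r k = r * (1 / 2) ^ (k + 2) := by
  simp only [chainRadius, pow_succ]
  ring

lemma chainRadius_lt_succ (hr : 0 < r) (k : ℕ) : chainRadius r k < chainRadius r (k + 1) := by
  have hgap : 0 < r * (1 / 2 : ℝ) ^ (k + 2) := by positivity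
  linarith [chainRadius_succ_sub (r := r) k]

lemma mixedNorm_le_of_rescaled_le (hp : 0 < p) (hβ : 0 < β) {v : ℝ × (Fin n → ℝ) → ℝ}
    {a Γ ρ : ℝ} (hr : 0 < r) (hρ : 0 ≤ ρ) (hρr : ρ ≤ 2 * r)
    (hβnorm : ENNReal.ofReal (r ^ (-scaleExp n p β)) *
      mixedNorm n p β (Set.Ioc (1 - (2 * r) ^ 2) 1) (Metric.ball 0 (2 * r)) v ≤
        ENNReal.ofReal (a / Γ)) :
    mixedNorm n p β (Set.Ioc (1 - ρ ^ 2) 1) (Metric.ball 0 ρ) v ≤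
      ENNReal.ofReal (a * r ^ scaleExp n p β / Γ) := by
  have hIoc : Set.Ioc (1 - ρ ^ 2) 1 ⊆ Set.Ioc (1 - (2 * r) ^ 2) 1 :=
    Set.Ioc_subset_Ioc (by nlinarith) le_rfl
  refine (mixedNorm_mono hp hβ hIoc (Metric.ball_subset_ball hρr) v).trans ?_
  rw [mul_comm, ← ENNReal.le_div_iff_mul_le (Or.inl (ENNReal.ofReal_pos.2 (by positivity)).ne')
    (Or.inl ENNReal.ofReal_ne_top), ← ENNReal.ofReal_div_of_pos (by positivity),
    Real.rpow_neg hr.le, div_inv_eq_mul] at hβnorm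
  exact hβnorm.trans_eq (by ring_nf)

lemma alpha_bound_of_supNorm_le (hp : 0 < p) (hβ : 0 < β) (hβα : β < α)
    {v : ℝ × (Fin n → ℝ) → ℝ} (hv : Measurable v) {a Γ : ℝ} (hr : 0 < r) (ha : 0 < a)
    (hΓ : 0 < Γ) (k : ℕ)
    (hsup : supNorm n (pCyl n (chainRadius r (k + 1)) (1, 0)) v ≤
      ENNReal.ofReal (jumpFactor n p α β ^ (k + 1) * a))
    (hβnorm : ENNReal.ofReal (r ^ (-scaleExp n p β)) *
      mixedNorm n p β (Set.Ioc (1 - (2 * r) ^ 2) 1) (Metric.ball 0 (2 * r)) v ≤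
        ENNReal.ofReal (a / Γ)) :
    ENNReal.ofReal ((chainRadius r (k + 1) - chainRadius r k) ^ (-scaleExp n p α)) *
      mixedNorm n p α (Set.Ioc (1 - chainRadius r (k + 1) ^ 2) 1)
        (Metric.ball 0 (chainRadius r (k + 1))) v ≤
      ENNReal.ofReal (jumpFactor n p α β ^ k * a /
        (Γ ^ (β / α) * 2 ^ k / gammaConst n p α β)) := by
  have hα : 0 < α := hβ.trans hβα
  have hM := zero_lt_one.trans (one_lt_jumpFactor n p α β hp hα hβ)
  set ρ := chainRadius r (k + 1)
  have hρ : 0 < ρ := chainRadius_pos hr _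
  have hρ32 : ρ ≤ 3 * r / 2 := chainRadius_le hr.le _
  have hθ : 0 ≤ 1 - β / α := by rw [sub_nonneg, div_le_one hα]; exact hβα.le
  have hvol : volume (Set.Ioc (1 - ρ ^ 2) 1) = ENNReal.ofReal (ρ ^ 2) := by
    simp [Real.volume_Ioc]
  calc ENNReal.ofReal ((ρ - chainRadius r k) ^ (-scaleExp n p α)) *
        mixedNorm n p α (Set.Ioc (1 - ρ ^ 2) 1) (Metric.ball 0 ρ) v
      ≤ ENNReal.ofReal ((ρ - chainRadius r k) ^ (-scaleExp n p α)) *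
        (ENNReal.ofReal (jumpFactor n p α β ^ (k + 1) * a) ^ (1 - β / α) *
          ENNReal.ofReal ((3 * r / 2) ^ 2) ^ ((1 - β / α) / p) *
          ENNReal.ofReal (a * r ^ scaleExp n p β / Γ) ^ (β / α)) := by
        gcongr
        refine (mixedNorm_le_supNorm_rpow_mul hp hβ hβα.le hv _ _).trans ?_
        rw [hvol]
        gcongr
        · exact hsup
        · exact mixedNorm_le_of_rescaled_le n p β hp hβ hr hρ.le (by linarith) hβnorm
    _ = ENNReal.ofReal ((r * (1 / 2) ^ (k + 2)) ^ (-scaleExp n p α) *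
          ((jumpFactor n p α β ^ (k + 1) * a) ^ (1 - β / α) *
          ((3 * r / 2) ^ 2) ^ ((1 - β / α) / p) * (a * r ^ scaleExp n p β / Γ) ^ (β / α))) := by
        rw [chainRadius_succ_sub, ENNReal.ofReal_rpow_of_nonneg (by positivity) hθ,
          ENNReal.ofReal_rpow_of_nonneg (by positivity) (by positivity),
          ENNReal.ofReal_rpow_of_nonneg (by positivity) (by positivity),
          ← ENNReal.ofReal_mul (by positivity), ← ENNReal.ofReal_mul (by positivity),
          ← ENNReal.ofReal_mul (by positivity)]
    _ = _ := by rw [rescaled_bound_eq n p α β hp hα hβ hr ha hΓ]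

/-- On this event the hypothesis at exponent `α` applies between the radii `ρ_k < ρ_{k+1}`, at
level `M^k a` and with `Γ` replaced by `Γ_k = Γ^{β/α} 2^k / C`. -/
def ChainExceeds (v : ℝ × (Fin n → ℝ) → ℝ) (r a Γ : ℝ) (k : ℕ) : Prop :=
  ENNReal.ofReal (jumpFactor n p α β ^ k * a) < supNorm n (pCyl n (chainRadius r k) (1, 0)) v ∧
    ENNReal.ofReal ((chainRadius r (k + 1) - chainRadius r k) ^ (-scaleExp n p α)) *
      mixedNorm n p α (Set.Ioc (1 - chainRadius r (k + 1) ^ 2) 1)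
        (Metric.ball 0 (chainRadius r (k + 1))) v ≤
      ENNReal.ofReal (jumpFactor n p α β ^ k * a / (Γ ^ (β / α) * 2 ^ k / gammaConst n p α β))

lemma exists_chainExceeds (hp : 0 < p) (hβ : 0 < β) (hβα : β < α)
    {v : ℝ × (Fin n → ℝ) → ℝ} (hv : Measurable v) {a Γ : ℝ} (hr : 0 < r) (ha : 0 < a)
    (hΓ : 0 < Γ) (hsup : ENNReal.ofReal a < supNorm n (pCyl n r (1, 0)) v)
    (hfin : supNorm n (pCyl n (3 * r / 2) (1, 0)) v ≠ ⊤)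
    (hβnorm : ENNReal.ofReal (r ^ (-scaleExp n p β)) *
      mixedNorm n p β (Set.Ioc (1 - (2 * r) ^ 2) 1) (Metric.ball 0 (2 * r)) v ≤
        ENNReal.ofReal (a / Γ)) :
    ∃ k, ChainExceeds n p α β v r a Γ k := by
  set M := jumpFactor n p α β
  set s : ℕ → ℝ≥0∞ := fun k => supNorm n (pCyl n (chainRadius r k) (1, 0)) v
  have hs0 : ENNReal.ofReal (M ^ 0 * a) < s 0 := by
    simpa [s, chainRadius_zero] using hsup
  have hbounded : ∃ k, s k ≤ ENNReal.ofReal (M ^ k * a) := by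
    obtain ⟨k, hk⟩ := pow_unbounded_of_one_lt
      ((supNorm n (pCyl n (3 * r / 2) (1, 0)) v).toReal / a)
      (one_lt_jumpFactor n p α β hp (hβ.trans hβα) hβ)
    refine ⟨k, (supNorm_mono (pCyl_mono (chainRadius_pos hr k).le
      (chainRadius_le hr.le k) _) v).trans ?_⟩
    rw [← ENNReal.ofReal_toReal hfin]
    exact ENNReal.ofReal_le_ofReal ((div_lt_iff₀ ha).1 hk).le
  obtain ⟨k, hk, hk1⟩ := exists_lt_and_succ_le hs0 hbounded
  exact ⟨k, hk, alpha_bound_of_supNorm_le n p α β hp hβ hβα hv hr ha hΓ k hk1 hβnorm⟩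

def SupTailBound {Ω : Type*} [MeasurableSpace Ω] (P : Measure Ω)
    (u : Ω → ℝ × (Fin n → ℝ) → ℝ) (δ Γ₀ : ℝ) : Prop :=
  ∀ r R : ℝ, 0 < r → r < R → R ≤ 1 → ∀ a > (0 : ℝ), ∀ Γ > Γ₀,
    P {ω | supNorm n (pCyl n r (1, 0)) (u ω) > ENNReal.ofReal a ∧
        ENNReal.ofReal ((R - r) ^ (-((n : ℝ) / α + 2 / p))) *
          mixedNorm n p α (Set.Ioc (1 - R ^ 2) 1) (Metric.ball (0 : Fin n → ℝ) R) (u ω)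
          ≤ ENNReal.ofReal (a / Γ)} ≤
      ENNReal.ofReal (Real.exp (-(Γ ^ δ / R ^ 2)))

namespace SupTailBound

variable {n p α β} {Ω : Type*} [MeasurableSpace Ω] {P : Measure Ω}
  {u : Ω → ℝ × (Fin n → ℝ) → ℝ} {δ Γ₀ : ℝ}

lemma measure_supNorm_eq_top (H : SupTailBound n p α P u δ Γ₀) (hδ : 0 < δ)
    (hfin : ∀ᵐ ω ∂P,
      mixedNorm n p α (Set.Ioc (0 : ℝ) 1) (Metric.ball (0 : Fin n → ℝ) 1) (u ω) < ⊤)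
    {ρ : ℝ} (hρ : 0 < ρ) (hρ1 : ρ < 1) :
    P {ω | supNorm n (pCyl n ρ (1, 0)) (u ω) = ⊤} = 0 := by
  refine measure_eq_top_eq_zero_of_tail_bound (Γ₀ := Γ₀)
    (Y := fun ω => ENNReal.ofReal ((1 - ρ) ^ (-((n : ℝ) / α + 2 / p))) *
      mixedNorm n p α (Set.Ioc (0 : ℝ) 1) (Metric.ball (0 : Fin n → ℝ) 1) (u ω))
    (hfin.mono fun ω hω => ENNReal.mul_lt_top ENNReal.ofReal_lt_top hω)
    (ENNReal.ofReal_zero ▸ (ENNReal.tendsto_ofReal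
      (Real.tendsto_exp_neg_atTop_nhds_zero.comp (tendsto_rpow_atTop hδ))))
    fun a ha Γ hΓ => ?_
  simpa only [one_pow, sub_self, div_one, gt_iff_lt, Function.comp_apply] using
    H ρ 1 hρ hρ1 le_rfl a ha Γ hΓ

lemma measure_le_tsum_chainExceeds (H : SupTailBound n p α P u δ Γ₀) (hδ : 0 < δ)
    (hfin : ∀ᵐ ω ∂P,
      mixedNorm n p α (Set.Ioc (0 : ℝ) 1) (Metric.ball (0 : Fin n → ℝ) 1) (u ω) < ⊤)
    (hu : Measurable (Function.uncurry u)) (hp : 0 < p) (hβ : 0 < β) (hβα : β < α)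
    {r a Γ : ℝ} (hr : 0 < r) (hr2 : r ≤ 1 / 2) (ha : 0 < a) (hΓ : 0 < Γ) :
    P {ω | ENNReal.ofReal a < supNorm n (pCyl n r (1, 0)) (u ω) ∧
      ENNReal.ofReal (r ^ (-scaleExp n p β)) *
        mixedNorm n p β (Set.Ioc (1 - (2 * r) ^ 2) 1) (Metric.ball 0 (2 * r)) (u ω) ≤
          ENNReal.ofReal (a / Γ)} ≤
      ∑' k, P {ω | ChainExceeds n p α β (u ω) r a Γ k} := by
  have hnull := H.measure_supNorm_eq_top hδ hfin (ρ := 3 * r / 2) (by positivity) (by linarith)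
  refine (measure_mono_ae ?_).trans (measure_iUnion_le _)
  filter_upwards [measure_eq_zero_iff_ae_notMem.1 hnull] with ω hω ⟨hsup, hβnorm⟩
  exact Set.mem_iUnion.2 (exists_chainExceeds n p α β hp hβ hβα
    (hu.comp measurable_prodMk_left) hr ha hΓ hsup hω hβnorm)

lemma measure_chainExceeds_le (H : SupTailBound n p α P u δ Γ₀) (hp : 0 < p) (hα : 0 < α)
    (hβ : 0 < β) {r a Γ : ℝ} (hr : 0 < r) (hr2 : r ≤ 1 / 2) (ha : 0 < a) (hΓ : 0 ≤ Γ)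
    (hΓ₀ : gammaConst n p α β * Γ₀ < Γ ^ (β / α)) (k : ℕ) :
    P {ω | ChainExceeds n p α β (u ω) r a Γ k} ≤ ENNReal.ofReal (Real.exp
      (-((Γ ^ (β / α) / gammaConst n p α β) ^ δ * (2 ^ δ) ^ k / (4 * r ^ 2)))) := by
  have hC := gammaConst_pos n p α β
  have hρ := chainRadius_pos hr (k + 1)
  have hρ2r : chainRadius r (k + 1) ≤ 2 * r := (chainRadius_le hr.le _).trans (by linarith)
  have hΓk : Γ₀ < Γ ^ (β / α) * 2 ^ k / gammaConst n p α β := by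
    rw [lt_div_iff₀ hC]
    nlinarith [one_le_pow₀ (by norm_num : (1 : ℝ) ≤ 2) (n := k), Real.rpow_nonneg hΓ (β / α)]
  have hMa : 0 < jumpFactor n p α β ^ k * a :=
    mul_pos (pow_pos (zero_lt_one.trans (one_lt_jumpFactor n p α β hp hα hβ)) k) ha
  refine (H _ _ (chainRadius_pos hr k) (chainRadius_lt_succ hr k) (by linarith) _ hMa _
    hΓk).trans ?_
  rw [mul_div_right_comm, Real.mul_rpow (by positivity) (by positivity),
    ← Real.rpow_pow_comm (by norm_num)]
  gcongr
  nlinarith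

end SupTailBound

end ExponentReduction

open ExponentReduction

theorem exponent_reduction_space_general
    {Ω : Type*} [MeasurableSpace Ω] (P : Measure Ω) [IsProbabilityMeasure P]
    (n : ℕ) (p α β : ℝ) (hp : 0 < p) (hα : 0 < α)
    (hβ₁ : α / 2 < β) (hβ₂ : β < α)
    (u : Ω → ℝ × (Fin n → ℝ) → ℝ) (hu : Measurable (Function.uncurry u))
    (hfin : ∀ᵐ ω ∂P,
      mixedNorm n p α (Set.Ioc (0 : ℝ) 1) (Metric.ball (0 : Fin n → ℝ) 1) (u ω) < ⊤)
    (δα Γα : ℝ) (hδα : 0 < δα)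
    (H : ∀ r R : ℝ, 0 < r → r < R → R ≤ 1 → ∀ a > (0 : ℝ), ∀ Γ > Γα,
      P {ω | supNorm n (pCyl n r (1, 0)) (u ω) > ENNReal.ofReal a ∧
          ENNReal.ofReal ((R - r) ^ (-((n : ℝ) / α + 2 / p))) *
            mixedNorm n p α (Set.Ioc (1 - R ^ 2) 1) (Metric.ball (0 : Fin n → ℝ) R) (u ω)
            ≤ ENNReal.ofReal (a / Γ)} ≤
        ENNReal.ofReal (Real.exp (-(Γ ^ δα / R ^ 2)))) :
    ∃ δβ > (0 : ℝ), ∃ Γβ ≥ (1 : ℝ), ∀ Γ > Γβ, ∀ a > (0 : ℝ), ∀ r : ℝ, 0 < r → r ≤ 1 / 2 →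
      P {ω | supNorm n (pCyl n r (1, 0)) (u ω) > ENNReal.ofReal a ∧
          ENNReal.ofReal (r ^ (-((n : ℝ) / β + 2 / p))) *
            mixedNorm n p β (Set.Ioc (1 - (2 * r) ^ 2) 1)
              (Metric.ball (0 : Fin n → ℝ) (2 * r)) (u ω)
            ≤ ENNReal.ofReal (a / Γ)} ≤
        ENNReal.ofReal (Real.exp (-(Γ ^ δβ / (4 * r ^ 2)))) := by
  have hβ : 0 < β := (half_pos hα).trans hβ₁
  have H : SupTailBound n p α P u δα Γα := H
  obtain ⟨Γ₁, hΓ₁⟩ := eventually_atTop.1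
    (eventually_tail_conditions (div_pos hβ hα) hδα (gammaConst_pos n p α β) Γα)
  refine ⟨β / α * δα / 2, by positivity, max Γ₁ 1, le_max_right _ _,
    fun Γ hΓ a ha r hr hr2 => ?_⟩
  obtain ⟨hΓα, hlog, hT⟩ := hΓ₁ Γ ((le_max_left _ _).trans hΓ.le)
  have hΓ0 : 0 < Γ := zero_lt_one.trans_le ((le_max_right _ _).trans hΓ.le)
  calc _ ≤ ∑' k, P {ω | ChainExceeds n p α β (u ω) r a Γ k} :=
        H.measure_le_tsum_chainExceeds hδα hfin hu hp hβ hβ₂ hr hr2 ha hΓ0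
    _ ≤ ∑' k : ℕ, ENNReal.ofReal (Real.exp (-((Γ ^ (β / α) / gammaConst n p α β) ^ δα *
          (2 ^ δα) ^ k / (4 * r ^ 2)))) :=
        ENNReal.tsum_le_tsum (H.measure_chainExceeds_le hp hα hβ hr hr2 ha hΓ0.le hΓα)
    _ ≤ ENNReal.ofReal (Real.exp (-(((Γ ^ (β / α) / gammaConst n p α β) ^ δα - Real.log 2) /
          (4 * r ^ 2)))) :=
        tsum_ofReal_exp_neg_geometric_le (Real.one_lt_rpow one_lt_two hδα) (by positivity)
          (by nlinarith) hlog
    _ ≤ _ := by gcongr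

/-- Exponent reduction in space. -/
theorem exponent_reduction_space
    {Ω : Type*} [MeasurableSpace Ω] (P : Measure Ω) [IsProbabilityMeasure P]
    (n : ℕ) (hn : 1 ≤ n) (p α β : ℝ) (hp : 0 < p) (hα : 0 < α)
    (hβ₁ : α / 2 < β) (hβ₂ : β < α)
    (u : Ω → ℝ × (Fin n → ℝ) → ℝ) (hu : Measurable (Function.uncurry u))
    (hfin : ∀ᵐ ω ∂P,
      mixedNorm n p α (Set.Ioc (0 : ℝ) 1) (Metric.ball (0 : Fin n → ℝ) 1) (u ω) < ⊤)
    (δα Γα : ℝ) (hδα : 0 < δα) (hΓα : 1 ≤ Γα)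
    (H : ∀ r R : ℝ, 0 < r → r < R → R ≤ 1 → ∀ a > (0 : ℝ), ∀ Γ > Γα,
      P {ω | supNorm n (pCyl n r (1, 0)) (u ω) > ENNReal.ofReal a ∧
          ENNReal.ofReal ((R - r) ^ (-((n : ℝ) / α + 2 / p))) *
            mixedNorm n p α (Set.Ioc (1 - R ^ 2) 1) (Metric.ball (0 : Fin n → ℝ) R) (u ω)
            ≤ ENNReal.ofReal (a / Γ)} ≤
        ENNReal.ofReal (Real.exp (-(Γ ^ δα / R ^ 2)))) :
    ∃ δβ > (0 : ℝ), ∃ Γβ ≥ (1 : ℝ), ∀ Γ > Γβ, ∀ a > (0 : ℝ), ∀ r : ℝ, 0 < r → r ≤ 1 / 2 →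
      P {ω | supNorm n (pCyl n r (1, 0)) (u ω) > ENNReal.ofReal a ∧
          ENNReal.ofReal (r ^ (-((n : ℝ) / β + 2 / p))) *
            mixedNorm n p β (Set.Ioc (1 - (2 * r) ^ 2) 1)
              (Metric.ball (0 : Fin n → ℝ) (2 * r)) (u ω)
            ≤ ENNReal.ofReal (a / Γ)} ≤
        ENNReal.ofReal (Real.exp (-(Γ ^ δβ / (4 * r ^ 2)))) :=
  exponent_reduction_space_general P n p α β hp hα hβ₁ hβ₂ u hu hfin δα Γα hδα H
end
end

section
/- Scaled tail bound from local tail bounds (covering strengthening). Fix a dimension n ≥ 1 and let u : Ω × Q₁ → ℝ be jointly measurable. Suppose there exist constants Γ₀ ≥ 1 and δ₀ > 0 such that for every a > 0, every r ∈ (0,1], every Γ ≥ Γ₀, and every (t₀,x₀) ∈ ℝ×ℝⁿ with Q_r(t₀,x₀) ⊆ Q₁, P( ‖u‖_{∞,Q_{r/2}(t₀,x₀)} > a and (r/2)^{−(n+1)/2}·‖u‖_{4,2,Q_r(t₀,x₀)} ≤ a/Γ ) ≤ exp(−Γ^{δ₀}/r²). Then there exist constants Γ' ≥ 1 and δ'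 > 0, depending only on n, Γ₀ and δ₀, such that for every a > 0, every Γ ≥ Γ' and all 0 < r < R ≤ 1, P( ‖u‖_{∞,Q_r} > a and (R−r)^{−(n+1)/2}·‖u‖_{4,2,Q_R} ≤ a/Γ ) ≤ exp(−Γ^{δ'}/R²). -/
open MeasureTheory
open scoped ENNReal

noncomputable section

private lemma mixedNorm_mono_dom (n : ℕ) {I I' : Set ℝ} {B B' : Set (Fin n → ℝ)}
    (hI : I' ⊆ I) (hB : B' ⊆ B) (h : ℝ × (Fin n → ℝ) → ℝ) :
    mixedNorm n 4 2 I' B' h ≤ mixedNorm n 4 2 I B h := by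
  unfold mixedNorm
  refine ENNReal.rpow_le_rpow ?_ (by norm_num)
  calc ∫⁻ t in I', (∫⁻ x in B', ENNReal.ofReal (|h (t, x)| ^ (2:ℝ))) ^ ((4:ℝ)/2)
      ≤ ∫⁻ t in I', (∫⁻ x in B, ENNReal.ofReal (|h (t, x)| ^ (2:ℝ))) ^ ((4:ℝ)/2) :=
        lintegral_mono fun t => ENNReal.rpow_le_rpow (lintegral_mono_set hB) (by norm_num)
    _ ≤ _ := lintegral_mono_set hI

private lemma exists_supNorm_gt {n : ℕ} {ι : Type*} (S : Finset ι)
    (D : ι → Set (ℝ × (Fin n → ℝ))) {D₀ : Set (ℝ × (Fin n → ℝ))}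
    (hcov : D₀ ⊆ ⋃ p ∈ S, D p) {f : ℝ × (Fin n → ℝ) → ℝ} {c : ℝ≥0∞}
    (hgt : c < supNorm n D₀ f) : ∃ p ∈ S, c < supNorm n (D p) f := by
  by_contra hcon
  push_neg at hcon
  refine absurd ?_ hgt.not_ge
  refine essSup_le_of_ae_le c ?_
  have h1 : ∀ᵐ z ∂(volume.restrict (⋃ p ∈ S, D p)), ENNReal.ofReal |f z| ≤ c := by
    rw [ae_restrict_biUnion_finset_iff]
    intro p hp
    filter_upwards [ae_le_essSup (μ := volume.restrict (D p))
      (f := fun z => ENNReal.ofReal |f z|)] with z hz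
    exact hz.trans (hcon p hp)
  exact h1.filter_mono (ae_mono (Measure.restrict_mono hcov le_rfl))

set_option maxHeartbeats 2000000 in
/-- Scaled tail bound from local tail bounds (covering strengthening). -/
theorem scaled_tail_bound_from_local
    {Ω : Type*} [MeasurableSpace Ω] (P : Measure Ω) [IsProbabilityMeasure P]
    (n : ℕ) (hn : 1 ≤ n)
    (u : Ω → ℝ × (Fin n → ℝ) → ℝ) (hu : Measurable (Function.uncurry u))
    (Γ₀ δ₀ : ℝ) (hΓ₀ : 1 ≤ Γ₀) (hδ₀ : 0 < δ₀)
    (H : ∀ a > (0 : ℝ), ∀ r : ℝ, 0 < r → r ≤ 1 → ∀ Γ ≥ Γ₀, ∀ c : ℝ × (Fin n → ℝ),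
      pCyl n r c ⊆ pCyl n 1 (1, 0) →
      P {ω | supNorm n (pCyl n (r / 2) c) (u ω) > ENNReal.ofReal a ∧
          ENNReal.ofReal ((r / 2) ^ (-(((n : ℝ) + 1) / 2))) *
            mixedNorm n 4 2 (Set.Ioc (c.1 - r ^ 2) c.1) (Metric.ball c.2 r) (u ω)
            ≤ ENNReal.ofReal (a / Γ)} ≤
        ENNReal.ofReal (Real.exp (-(Γ ^ δ₀ / r ^ 2)))) :
    ∃ Γ' ≥ (1 : ℝ), ∃ δ' > (0 : ℝ), ∀ a > (0 : ℝ), ∀ Γ ≥ Γ', ∀ r R : ℝ,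
      0 < r → r < R → R ≤ 1 →
      P {ω | supNorm n (pCyl n r (1, 0)) (u ω) > ENNReal.ofReal a ∧
          ENNReal.ofReal ((R - r) ^ (-(((n : ℝ) + 1) / 2))) *
            mixedNorm n 4 2 (Set.Ioc (1 - R ^ 2) 1) (Metric.ball (0 : Fin n → ℝ) R) (u ω)
            ≤ ENNReal.ofReal (a / Γ)} ≤
        ENNReal.ofReal (Real.exp (-(Γ ^ δ' / R ^ 2))) := by
  classical
  set s : ℝ := ((n : ℝ) + 1) / 2 with hsdef
  have hs0 : (0:ℝ) ≤ s := by positivity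
  have h2s1 : (1:ℝ) ≤ 2 ^ s := Real.one_le_rpow one_le_two hs0
  have h2s0 : (0:ℝ) < 2 ^ s := lt_of_lt_of_le one_pos h2s1
  set B : ℝ := 2 ^ (s * δ₀) with hBdef
  have hB1 : (1:ℝ) ≤ B := Real.one_le_rpow one_le_two (by positivity)
  have hB0 : (0:ℝ) < B := lt_of_lt_of_le one_pos hB1
  set A : ℝ := B * (6 * ((n:ℝ) + 1) + 1) with hAdef
  have hA1 : (1:ℝ) ≤ A := by
    have hn0 : (0:ℝ) ≤ (n:ℝ) := Nat.cast_nonneg n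
    have h6 : (1:ℝ) ≤ 6 * ((n:ℝ) + 1) + 1 := by linarith
    calc (1:ℝ) = 1 * 1 := by ring
      _ ≤ B * (6 * ((n:ℝ) + 1) + 1) := mul_le_mul hB1 h6 one_pos.le hB0.le
  have hA0 : (0:ℝ) < A := lt_of_lt_of_le one_pos hA1
  clear_value s B A
  refine ⟨max (2 ^ s * Γ₀) (A ^ (2 / δ₀)), ?_, δ₀ / 2, by positivity, ?_⟩
  · refine le_max_of_le_left ?_
    calc (1:ℝ) ≤ Γ₀ := hΓ₀
      _ ≤ 2 ^ s * Γ₀ := le_mul_of_one_le_left (by linarith) h2s1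
  intro a ha Γ hΓ r R hr hrR hR1
  -- basic positivity facts
  have hΓ1 : (1:ℝ) ≤ Γ := by
    refine le_trans ?_ hΓ
    refine le_max_of_le_left ?_
    calc (1:ℝ) ≤ Γ₀ := hΓ₀
      _ ≤ 2 ^ s * Γ₀ := le_mul_of_one_le_left (by linarith) h2s1
  have hΓpos : (0:ℝ) < Γ := lt_of_lt_of_le one_pos hΓ1
  set ρ : ℝ := R - r with hρdef
  have hρ0 : (0:ℝ) < ρ := sub_pos.2 hrR
  have hR0 : (0:ℝ) < R := lt_trans hr hrR
  have hρR : ρ < R := by rw [hρdef]; linarith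
  have hρ1 : ρ ≤ 1 := le_trans hρR.le hR1
  have hr1 : r ≤ 1 := le_trans hrR.le hR1
  set Γℓ : ℝ := Γ / 2 ^ s with hΓℓdef
  have hΓℓ0' : Γ₀ ≤ Γℓ := by
    rw [hΓℓdef, le_div_iff₀ h2s0]
    calc Γ₀ * 2 ^ s = 2 ^ s * Γ₀ := mul_comm _ _
      _ ≤ max (2 ^ s * Γ₀) (A ^ (2 / δ₀)) := le_max_left _ _
      _ ≤ Γ := hΓ
  clear_value ρ Γℓ
  have hΓℓ0 : Γ₀ ≤ Γℓ := hΓℓ0'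
  -- index sets and centers
  set K : ℕ := ⌈4 / ρ ^ 2⌉₊ with hKdef
  set M : ℕ := ⌈4 / ρ⌉₊ with hMdef
  set T : Finset ℕ := (Finset.range (K + 1)).filter
    (fun k => (k : ℝ) * (ρ / 2) ^ 2 < r ^ 2) with hTdef
  set S : Finset (ℕ × (Fin n → ℕ)) :=
    T ×ˢ Fintype.piFinset (fun _ : Fin n => Finset.range (M + 1)) with hSdef
  set ctr : ℕ × (Fin n → ℕ) → ℝ × (Fin n → ℝ) :=
    fun p => (1 - (p.1 : ℝ) * (ρ / 2) ^ 2, fun i => min (-r + (p.2 i : ℝ) * (ρ / 2)) r)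
    with hctrdef
  -- containment of the local cylinders in Q_R
  have hr2R2 : r ^ 2 + ρ ^ 2 ≤ R ^ 2 := by rw [hρdef]; nlinarith
  have hsubI : ∀ p ∈ S, Set.Ioc ((ctr p).1 - ρ ^ 2) (ctr p).1 ⊆ Set.Ioc (1 - R ^ 2) 1 := by
    intro p hp
    obtain ⟨hpT, -⟩ := Finset.mem_product.1 hp
    have hk : (p.1 : ℝ) * (ρ / 2) ^ 2 < r ^ 2 := (Finset.mem_filter.1 hpT).2
    have hknn : (0:ℝ) ≤ (p.1 : ℝ) * (ρ / 2) ^ 2 := by positivity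
    apply Set.Ioc_subset_Ioc
    · simp only [hctrdef]; nlinarith
    · simp only [hctrdef]; linarith
  have hsubB : ∀ p ∈ S, Metric.ball (ctr p).2 ρ ⊆ Metric.ball (0 : Fin n → ℝ) R := by
    intro p _
    intro z hz
    have hc : dist (ctr p).2 (0 : Fin n → ℝ) ≤ r := by
      rw [dist_pi_le_iff hr.le]
      intro i
      have hji : (0:ℝ) ≤ (p.2 i : ℝ) * (ρ / 2) := by positivity
      simp only [hctrdef, Pi.zero_apply, Real.dist_eq, sub_zero]
      rw [abs_le]
      constructor
      · exact le_min (by linarith) (by linarith)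
      · exact min_le_right _ _
    rw [Metric.mem_ball] at hz ⊢
    calc dist z 0 ≤ dist z (ctr p).2 + dist (ctr p).2 0 := dist_triangle _ _ _
      _ < ρ + r := add_lt_add_of_lt_of_le hz hc
      _ = R := by rw [hρdef]; ring
  have hsub1 : ∀ p ∈ S, pCyl n ρ (ctr p) ⊆ pCyl n 1 (1, 0) := by
    intro p hp
    unfold pCyl
    apply Set.prod_mono
    · refine (hsubI p hp).trans (Set.Ioc_subset_Ioc ?_ ?_)
      · show (1:ℝ) - 1 ^ 2 ≤ 1 - R ^ 2
        nlinarith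
      · show (1:ℝ) ≤ 1
        exact le_rfl
    · refine (hsubB p hp).trans ?_
      show Metric.ball (0 : Fin n → ℝ) R ⊆ Metric.ball (0 : Fin n → ℝ) 1
      exact Metric.ball_subset_ball hR1
  -- covering of Q_r by the local half-cylinders
  have hcov : pCyl n r (1, 0) ⊆ ⋃ p ∈ S, pCyl n (ρ / 2) (ctr p) := by
    rintro ⟨t, x⟩ hz
    obtain ⟨⟨ht1, ht2⟩, hx⟩ : ((1:ℝ) - r ^ 2 < t ∧ t ≤ 1) ∧ x ∈ Metric.ball (0 : Fin n → ℝ) r := by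
      simpa [pCyl] using hz
    have hh0 : (0:ℝ) < ρ / 2 := by positivity
    set k : ℕ := ⌊(1 - t) / (ρ / 2) ^ 2⌋₊ with hkdef
    set j : Fin n → ℕ := fun i => ⌊(x i + r) / (ρ / 2)⌋₊ with hjdef
    have h1t : (0:ℝ) ≤ 1 - t := by linarith
    have h1t' : 1 - t < r ^ 2 := by linarith
    have hkle : (k : ℝ) * (ρ / 2) ^ 2 ≤ 1 - t := by
      rw [← le_div_iff₀ (by positivity)]
      exact Nat.floor_le (by positivity)
    have hklt : 1 - t < ((k : ℝ) + 1) * (ρ / 2) ^ 2 := by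
      rw [← div_lt_iff₀ (by positivity)]
      exact Nat.lt_floor_add_one _
    have hxi : ∀ i, |x i| < r := by
      intro i
      have h1 := dist_le_pi_dist x (0 : Fin n → ℝ) i
      rw [Metric.mem_ball] at hx
      simp only [Pi.zero_apply, Real.dist_eq, sub_zero] at h1
      exact lt_of_le_of_lt h1 (by simpa [Real.dist_eq] using hx)
    have hjle : ∀ i, (j i : ℝ) * (ρ / 2) ≤ x i + r := by
      intro i
      rw [← le_div_iff₀ hh0]
      exact Nat.floor_le (div_nonneg (by linarith [(abs_lt.1 (hxi i)).1]) hh0.le)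
    have hjlt : ∀ i, x i + r < ((j i : ℝ) + 1) * (ρ / 2) := by
      intro i
      rw [← div_lt_iff₀ hh0]
      exact Nat.lt_floor_add_one _
    refine Set.mem_iUnion₂.2 ⟨(k, j), ?_, ?_⟩
    · refine Finset.mem_product.2 ⟨?_, ?_⟩
      · refine Finset.mem_filter.2 ⟨Finset.mem_range.2 ?_, lt_of_le_of_lt hkle h1t'⟩
        have hk4 : (k:ℝ) < 4 / ρ ^ 2 := by
          have h2 : (k:ℝ) * (ρ / 2) ^ 2 < r ^ 2 := lt_of_le_of_lt hkle h1t'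
          have hr2 : r ^ 2 ≤ 1 := by nlinarith
          rw [lt_div_iff₀ (by positivity)]
          nlinarith [h2, hr2]
        have hh := Nat.lt_ceil.2 hk4
        rw [hKdef]
        omega
      · refine Fintype.mem_piFinset.2 fun i => Finset.mem_range.2 ?_
        show j i < M + 1  -- reduce (k,j).2
        have hj4 : ((j i : ℕ) : ℝ) < 4 / ρ := by
          have h2 : (j i : ℝ) * (ρ / 2) ≤ x i + r := hjle i
          have h3 : x i + r < 2 * r := by have := (abs_lt.1 (hxi i)).2; linarith
          rw [lt_div_iff₀ hρ0]
          nlinarith [h2, h3, hr1, hh0]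
        have hh := Nat.lt_ceil.2 hj4
        show j i < M + 1
        rw [hMdef]
        omega
    · constructor
      · simp only [hctrdef, Set.mem_Ioc]
        constructor
        · nlinarith
        · linarith
      · rw [Metric.mem_ball, dist_pi_lt_iff hh0]
        intro i
        have hmin : min (-r + (j i : ℝ) * (ρ / 2)) r = -r + (j i : ℝ) * (ρ / 2) := by
          apply min_eq_left
          have := (abs_lt.1 (hxi i)).2
          linarith [hjle i]
        simp only [hctrdef, Real.dist_eq, hmin]
        rw [abs_lt]
        constructor
        · linarith [hjle i]
        · linarith [hjlt i]
  -- the local events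
  set Ep : ℕ × (Fin n → ℕ) → Set Ω := fun p =>
    {ω | supNorm n (pCyl n (ρ / 2) (ctr p)) (u ω) > ENNReal.ofReal a ∧
        ENNReal.ofReal ((ρ / 2) ^ (-s)) *
          mixedNorm n 4 2 (Set.Ioc ((ctr p).1 - ρ ^ 2) (ctr p).1)
            (Metric.ball (ctr p).2 ρ) (u ω)
          ≤ ENNReal.ofReal (a / Γℓ)} with hEpdef
  -- inclusion of the global event in the union of local events
  have hEsub : {ω | supNorm n (pCyl n r (1, 0)) (u ω) > ENNReal.ofReal a ∧
          ENNReal.ofReal (ρ ^ (-s)) *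
            mixedNorm n 4 2 (Set.Ioc (1 - R ^ 2) 1) (Metric.ball (0 : Fin n → ℝ) R) (u ω)
            ≤ ENNReal.ofReal (a / Γ)} ⊆ ⋃ p ∈ S, Ep p := by
    intro ω hω
    obtain ⟨h1, hmix⟩ := hω
    obtain ⟨p, hpS, hp1⟩ := exists_supNorm_gt S _ hcov h1
    refine Set.mem_iUnion₂.2 ⟨p, hpS, hp1, ?_⟩
    have hmono : mixedNorm n 4 2 (Set.Ioc ((ctr p).1 - ρ ^ 2) (ctr p).1)
          (Metric.ball (ctr p).2 ρ) (u ω)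
        ≤ mixedNorm n 4 2 (Set.Ioc (1 - R ^ 2) 1) (Metric.ball (0 : Fin n → ℝ) R) (u ω) :=
      mixedNorm_mono_dom n (hsubI p hpS) (hsubB p hpS) _
    have hsplit : ((ρ / 2 : ℝ)) ^ (-s) = 2 ^ s * ρ ^ (-s) := by
      rw [Real.div_rpow hρ0.le (by norm_num : (0:ℝ) ≤ 2),
        Real.rpow_neg (by norm_num : (0:ℝ) ≤ 2) s, div_eq_mul_inv, inv_inv, mul_comm]
    have hΓ0' : Γ ≠ 0 := ne_of_gt hΓpos
    calc ENNReal.ofReal ((ρ / 2) ^ (-s)) *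
          mixedNorm n 4 2 (Set.Ioc ((ctr p).1 - ρ ^ 2) (ctr p).1)
            (Metric.ball (ctr p).2 ρ) (u ω)
        = ENNReal.ofReal (2 ^ s) * (ENNReal.ofReal (ρ ^ (-s)) *
            mixedNorm n 4 2 (Set.Ioc ((ctr p).1 - ρ ^ 2) (ctr p).1)
              (Metric.ball (ctr p).2 ρ) (u ω)) := by
          rw [hsplit, ENNReal.ofReal_mul h2s0.le, mul_assoc]
      _ ≤ ENNReal.ofReal (2 ^ s) * (ENNReal.ofReal (ρ ^ (-s)) *
            mixedNorm n 4 2 (Set.Ioc (1 - R ^ 2) 1)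
              (Metric.ball (0 : Fin n → ℝ) R) (u ω)) :=
          mul_le_mul_right (mul_le_mul_right hmono _) _
      _ ≤ ENNReal.ofReal (2 ^ s) * ENNReal.ofReal (a / Γ) := mul_le_mul_right hmix _
      _ = ENNReal.ofReal (a / Γℓ) := by
          rw [← ENNReal.ofReal_mul h2s0.le]
          congr 1
          rw [hΓℓdef, div_div_eq_mul_div]
          ring
  -- put everything together
  refine le_trans (measure_mono hEsub) ?_
  refine le_trans (measure_biUnion_finset_le S Ep) ?_
  have hbound : ∀ p ∈ S, P (Ep p) ≤ ENNReal.ofReal (Real.exp (-(Γℓ ^ δ₀ / ρ ^ 2))) :=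
    fun p hp => H a ha ρ hρ0 hρ1 Γℓ hΓℓ0 (ctr p) (hsub1 p hp)
  refine le_trans (Finset.sum_le_sum hbound) ?_
  rw [Finset.sum_const, nsmul_eq_mul]
  -- cardinality bound
  have hρ2pos : (0:ℝ) < ρ ^ 2 := by positivity
  have hcard : (S.card : ℝ) ≤ ((K:ℝ) + 1) * ((M:ℝ) + 1) ^ n := by
    have h1 : S.card = T.card * (M + 1) ^ n := by
      rw [hSdef, Finset.card_product, Fintype.card_piFinset_const, Finset.card_range]
    have h2 : T.card ≤ K + 1 := by
      rw [hTdef]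
      exact le_trans (Finset.card_filter_le _ _) (le_of_eq (Finset.card_range _))
    calc (S.card : ℝ) = (T.card : ℝ) * ((M:ℝ) + 1) ^ n := by rw [h1]; push_cast; ring
      _ ≤ ((K:ℝ) + 1) * ((M:ℝ) + 1) ^ n := by
          refine mul_le_mul_of_nonneg_right ?_ (by positivity)
          exact_mod_cast h2
  have hinv1 : (1:ℝ) ≤ 1 / ρ ^ 2 := by
    rw [le_div_iff₀ hρ2pos]; nlinarith
  have hKK : ((K:ℝ) + 1) ≤ 6 / ρ ^ 2 := by
    have h1 : (K : ℝ) < 4 / ρ ^ 2 + 1 := by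
      rw [hKdef]; exact Nat.ceil_lt_add_one (by positivity)
    have h3 : 4 / ρ ^ 2 + 2 * (1 / ρ ^ 2) = 6 / ρ ^ 2 := by ring
    linarith
  have hMM : ((M:ℝ) + 1) ≤ 6 / ρ ^ 2 := by
    have h1 : (M : ℝ) < 4 / ρ + 1 := by
      rw [hMdef]; exact Nat.ceil_lt_add_one (by positivity)
    have h3 : 4 / ρ ≤ 4 / ρ ^ 2 := by
      rw [div_le_div_iff₀ hρ0 hρ2pos]; nlinarith
    have h4 : 4 / ρ ^ 2 + 2 * (1 / ρ ^ 2) = 6 / ρ ^ 2 := by ring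
    linarith
  have hN : (S.card : ℝ) ≤ Real.exp (6 * ((n:ℝ) + 1) / ρ ^ 2) := by
    have h6 : (0:ℝ) ≤ 6 / ρ ^ 2 := by positivity
    have hKM : (S.card : ℝ) ≤ (6 / ρ ^ 2) * (6 / ρ ^ 2) ^ n :=
      le_trans hcard (mul_le_mul hKK (pow_le_pow_left₀ (by positivity) hMM n)
        (by positivity) (by positivity))
    have hexp : (6:ℝ) / ρ ^ 2 ≤ Real.exp (6 / ρ ^ 2) := by
      have := Real.add_one_le_exp (6 / ρ ^ 2); linarith
    have hpow : (6 / ρ ^ 2 : ℝ) * (6 / ρ ^ 2) ^ n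
        ≤ Real.exp (6 / ρ ^ 2) * Real.exp (6 / ρ ^ 2) ^ n :=
      mul_le_mul hexp (pow_le_pow_left₀ h6 hexp n) (by positivity) (by positivity)
    have heq : Real.exp (6 / ρ ^ 2) * Real.exp (6 / ρ ^ 2) ^ n
        = Real.exp (6 * ((n:ℝ) + 1) / ρ ^ 2) := by
      rw [← Real.exp_nat_mul, ← Real.exp_add]
      congr 1
      ring
    linarith
  -- the key scalar inequality
  set g : ℝ := Γ ^ (δ₀ / 2) with hgdef
  have hg1 : (1:ℝ) ≤ g := Real.one_le_rpow hΓ1 (by positivity : (0:ℝ) ≤ δ₀ / 2)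
  have hAg : A ≤ g := by
    have hAΓ : A ^ (2 / δ₀) ≤ Γ := le_trans (le_max_right _ _) hΓ
    have hkey : (A ^ (2 / δ₀)) ^ (δ₀ / 2) = A := by
      rw [← Real.rpow_mul hA0.le, show (2 / δ₀) * (δ₀ / 2) = 1 by
        field_simp, Real.rpow_one]
    calc A = (A ^ (2 / δ₀)) ^ (δ₀ / 2) := hkey.symm
      _ ≤ Γ ^ (δ₀ / 2) := Real.rpow_le_rpow (by positivity) hAΓ (by positivity)
  have hgg : g * g = Γ ^ δ₀ := by
    rw [hgdef, ← Real.rpow_add hΓpos]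
    congr 1
    ring
  clear_value g
  have h2sd : ((2:ℝ) ^ s) ^ δ₀ = B := by
    rw [hBdef, ← Real.rpow_mul (by norm_num : (0:ℝ) ≤ 2)]
  have hΓℓpow : Γℓ ^ δ₀ = Γ ^ δ₀ / B := by
    rw [hΓℓdef, Real.div_rpow hΓpos.le (by positivity), h2sd]
  have hn0 : (0:ℝ) ≤ (n:ℝ) := Nat.cast_nonneg n
  have hstar : 6 * ((n:ℝ) + 1) + g ≤ Γℓ ^ δ₀ := by
    rw [hΓℓpow, le_div_iff₀ hB0]
    calc (6 * ((n:ℝ) + 1) + g) * B = B * (6 * ((n:ℝ) + 1) + g) := by ring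
      _ ≤ B * ((6 * ((n:ℝ) + 1) + 1) * g) := by
          refine mul_le_mul_of_nonneg_left ?_ hB0.le
          nlinarith
      _ = A * g := by rw [hAdef]; ring
      _ ≤ g * g := mul_le_mul_of_nonneg_right hAg (by linarith)
      _ = Γ ^ δ₀ := hgg
  -- finish
  have hfin : (S.card : ℝ) * Real.exp (-(Γℓ ^ δ₀ / ρ ^ 2)) ≤ Real.exp (-(g / R ^ 2)) := by
    have h1 : (S.card : ℝ) * Real.exp (-(Γℓ ^ δ₀ / ρ ^ 2))
        ≤ Real.exp (6 * ((n:ℝ) + 1) / ρ ^ 2) * Real.exp (-(Γℓ ^ δ₀ / ρ ^ 2)) :=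
      mul_le_mul_of_nonneg_right hN (Real.exp_nonneg _)
    rw [← Real.exp_add] at h1
    refine h1.trans (Real.exp_le_exp.2 ?_)
    have hR2pos : (0:ℝ) < R ^ 2 := by positivity
    have hgR : g / R ^ 2 ≤ g / ρ ^ 2 := by
      apply div_le_div_of_nonneg_left (by linarith) hρ2pos
      nlinarith
    have hdiv : (6 * ((n:ℝ) + 1) + g) / ρ ^ 2 ≤ Γℓ ^ δ₀ / ρ ^ 2 :=
      (div_le_div_iff_of_pos_right hρ2pos).2 hstar
    have hsplit2 : (6 * ((n:ℝ) + 1) + g) / ρ ^ 2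
        = 6 * ((n:ℝ) + 1) / ρ ^ 2 + g / ρ ^ 2 := by ring
    linarith
  calc (S.card : ℝ≥0∞) * ENNReal.ofReal (Real.exp (-(Γℓ ^ δ₀ / ρ ^ 2)))
      = ENNReal.ofReal ((S.card : ℝ) * Real.exp (-(Γℓ ^ δ₀ / ρ ^ 2))) := by
        rw [ENNReal.ofReal_mul (by positivity), ENNReal.ofReal_natCast]
    _ ≤ ENNReal.ofReal (Real.exp (-(g / R ^ 2))) := ENNReal.ofReal_le_ofReal hfin
end
end

section
/- De Giorgi iteration step. Let δ ∈ (0,1], C₀ ≥ 1 and C ≥ 1. There exist γ ∈ (0,1) and Γ₀ ≥ 1 such that for every Γ ≥ Γ₀, every a > 0 and every integer k ≥ 1, writing α := (2C)^{k/2}·Γ^δ and β := a²·γ^{k−1}·Γ^{−2}, one has C₀^k · a^{−2δ} · (β + α·β) · β^δ ≤ γ·β. -/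
/-- De Giorgi iteration step: with `α = (2C)^{k/2}·Γ^δ` and `β = a²·γ^{k−1}·Γ^{−2}`,
one can choose `γ ∈ (0,1)` and `Γ₀ ≥ 1` such that
`C₀^k · a^{−2δ} · (β + α·β) · β^δ ≤ γ·β` for all `Γ ≥ Γ₀`, `a > 0` and `k ≥ 1`. -/
theorem de_giorgi_iteration_step (δ C₀ C : ℝ) (hδ₀ : 0 < δ) (hδ₁ : δ ≤ 1)
    (hC₀ : 1 ≤ C₀) (hC : 1 ≤ C) :
    ∃ γ : ℝ, 0 < γ ∧ γ < 1 ∧ ∃ Γ₀ ≥ (1 : ℝ), ∀ Γ ≥ Γ₀, ∀ a > (0 : ℝ), ∀ k : ℕ, 1 ≤ k →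
      (C₀ ^ k * a ^ (-(2 * δ)) *
          ((a ^ 2 * γ ^ (k - 1) * Γ ^ (-2 : ℝ)) +
            ((2 * C) ^ ((k : ℝ) / 2) * Γ ^ δ) * (a ^ 2 * γ ^ (k - 1) * Γ ^ (-2 : ℝ))) *
          (a ^ 2 * γ ^ (k - 1) * Γ ^ (-2 : ℝ)) ^ δ) ≤
        γ * (a ^ 2 * γ ^ (k - 1) * Γ ^ (-2 : ℝ)) := by
  have h2C : (1:ℝ) ≤ 2 * C := by linarith
  set M : ℝ := C₀ * (2 * C) ^ ((1:ℝ)/2) with hMdef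
  have hroot1 : (1:ℝ) ≤ (2 * C) ^ ((1:ℝ)/2) := Real.one_le_rpow h2C (by norm_num)
  have hM1 : 1 ≤ M := by nlinarith
  have hMpos : 0 < M := by linarith
  set γ : ℝ := min (1/2) (M ^ (-(1/δ))) with hγdef
  have hγpos : 0 < γ := lt_min (by norm_num) (Real.rpow_pos_of_pos hMpos _)
  have hγlt1 : γ < 1 := lt_of_le_of_lt (min_le_left _ _) (by norm_num)
  have hMγ : M * γ ^ δ ≤ 1 := by
    have hle : γ ≤ M ^ (-(1/δ)) := min_le_right _ _
    have h1 : γ ^ δ ≤ (M ^ (-(1/δ))) ^ δ := Real.rpow_le_rpow hγpos.le hle hδ₀.le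
    have h2 : (M ^ (-(1/δ))) ^ δ = M⁻¹ := by
      rw [← Real.rpow_mul hMpos.le]
      rw [show (-(1/δ)) * δ = -1 by field_simp]
      simp [Real.rpow_neg_one]
    rw [h2] at h1
    calc M * γ ^ δ ≤ M * M⁻¹ := by
          exact mul_le_mul_of_nonneg_left h1 hMpos.le
      _ = 1 := mul_inv_cancel₀ (ne_of_gt hMpos)
  refine ⟨γ, hγpos, hγlt1, max 1 ((2 * M / γ) ^ (1/δ)), le_max_left _ _, ?_⟩
  intro Γ hΓ a ha k hk
  have hΓ1 : (1:ℝ) ≤ Γ := le_trans (le_max_left _ _) hΓ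
  have hΓpos : 0 < Γ := by linarith
  have hΓδ : 2 * M ≤ γ * Γ ^ δ := by
    have h1 : (2 * M / γ) ^ (1/δ) ≤ Γ := le_trans (le_max_right _ _) hΓ
    have hq : 0 < 2 * M / γ := by positivity
    have h2 : ((2 * M / γ) ^ (1/δ)) ^ δ ≤ Γ ^ δ :=
      Real.rpow_le_rpow (Real.rpow_nonneg hq.le _) h1 hδ₀.le
    rw [← Real.rpow_mul hq.le, show (1/δ) * δ = 1 by field_simp, Real.rpow_one] at h2
    rw [div_le_iff₀ hγpos] at h2
    linarith [h2]
  -- central scalar inequality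
  set α : ℝ := (2 * C) ^ ((k : ℝ) / 2) * Γ ^ δ with hαdef
  have hα1 : 1 ≤ α := by
    have h1 : (1:ℝ) ≤ (2 * C) ^ ((k : ℝ) / 2) := Real.one_le_rpow h2C (by positivity)
    have h2 : (1:ℝ) ≤ Γ ^ δ := Real.one_le_rpow hΓ1 hδ₀.le
    nlinarith
  have hMk : C₀ ^ k * (2 * C) ^ ((k : ℝ) / 2) = M ^ k := by
    rw [hMdef, mul_pow]
    congr 1
    rw [← Real.rpow_natCast ((2*C) ^ ((1:ℝ)/2)) k, ← Real.rpow_mul (by linarith : (0:ℝ) ≤ 2*C)]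
    congr 1
    ring
  have hkey : C₀ ^ k * (1 + α) * (γ ^ δ) ^ (k - 1) * Γ ^ (-(2 * δ)) ≤ γ := by
    have hγδpos : 0 < γ ^ δ := Real.rpow_pos_of_pos hγpos _
    have h1α : 1 + α ≤ 2 * α := by linarith
    have hΓnd : Γ ^ δ * Γ ^ (-(2*δ)) = Γ ^ (-δ) := by
      rw [← Real.rpow_add hΓpos]; ring_nf
    have step1 : C₀ ^ k * (1 + α) * (γ ^ δ) ^ (k - 1) * Γ ^ (-(2 * δ)) ≤
        2 * M ^ k * (γ ^ δ) ^ (k - 1) * Γ ^ (-δ) := by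
      have : C₀ ^ k * (1 + α) * (γ ^ δ) ^ (k - 1) * Γ ^ (-(2 * δ)) ≤
          C₀ ^ k * (2 * α) * (γ ^ δ) ^ (k - 1) * Γ ^ (-(2 * δ)) := by
        have hc : (0:ℝ) ≤ C₀ ^ k := by positivity
        have := mul_le_mul_of_nonneg_left h1α hc
        have h2 : (0:ℝ) ≤ (γ ^ δ) ^ (k - 1) * Γ ^ (-(2 * δ)) := by positivity
        nlinarith [mul_le_mul_of_nonneg_right this h2]
      refine le_trans this (le_of_eq ?_)
      rw [hαdef]
      calc C₀ ^ k * (2 * ((2 * C) ^ ((k : ℝ) / 2) * Γ ^ δ)) * (γ ^ δ) ^ (k - 1) * Γ ^ (-(2 * δ))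
          = 2 * (C₀ ^ k * (2 * C) ^ ((k : ℝ) / 2)) * (γ ^ δ) ^ (k - 1) * (Γ ^ δ * Γ ^ (-(2*δ))) := by ring
        _ = 2 * M ^ k * (γ ^ δ) ^ (k - 1) * Γ ^ (-δ) := by rw [hMk, hΓnd]
    have hMk1 : M ^ k * (γ ^ δ) ^ (k - 1) ≤ M := by
      have : M ^ k = M * M ^ (k - 1) := by
        conv_lhs => rw [show k = 1 + (k - 1) by omega]
        rw [pow_add, pow_one]
      rw [this, mul_assoc, ← mul_pow]
      have h1 : (M * γ ^ δ) ^ (k - 1) ≤ 1 := pow_le_one₀ (by positivity) hMγ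
      nlinarith [mul_le_mul_of_nonneg_left h1 hMpos.le]
    have step2 : 2 * M ^ k * (γ ^ δ) ^ (k - 1) * Γ ^ (-δ) ≤ 2 * M * Γ ^ (-δ) := by
      have hΓnδ : (0:ℝ) ≤ Γ ^ (-δ) := by positivity
      nlinarith [mul_le_mul_of_nonneg_right hMk1 hΓnδ]
    have step3 : 2 * M * Γ ^ (-δ) ≤ γ := by
      have hΓδpos : 0 < Γ ^ δ := Real.rpow_pos_of_pos hΓpos _
      rw [Real.rpow_neg hΓpos.le, ← div_eq_mul_inv, div_le_iff₀ hΓδpos]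
      linarith
    linarith [le_trans step1 step2]
  -- rewrite the goal
  set b : ℝ := a ^ 2 * γ ^ (k - 1) * Γ ^ (-2 : ℝ) with hbdef
  have hbpos : 0 < b := by positivity
  have hbδ : b ^ δ = a ^ (2 * δ) * (γ ^ δ) ^ (k - 1) * Γ ^ (-(2 * δ)) := by
    rw [hbdef, Real.mul_rpow (by positivity) (by positivity),
        Real.mul_rpow (by positivity) (by positivity)]
    congr 1
    · congr 1
      · rw [← Real.rpow_natCast a 2, ← Real.rpow_mul ha.le]
        norm_num
      · rw [← Real.rpow_natCast γ (k-1), ← Real.rpow_mul hγpos.le, mul_comm ((k-1:ℕ):ℝ) δ,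
          Real.rpow_mul hγpos.le, Real.rpow_natCast]
    · rw [← Real.rpow_mul hΓpos.le]
      ring_nf
  have haa : a ^ (-(2 * δ)) * a ^ (2 * δ) = 1 := by
    rw [← Real.rpow_add ha, neg_add_cancel, Real.rpow_zero]
  calc C₀ ^ k * a ^ (-(2 * δ)) * (b + α * b) * b ^ δ
      = (C₀ ^ k * (1 + α) * (γ ^ δ) ^ (k - 1) * Γ ^ (-(2 * δ))) * b *
          (a ^ (-(2 * δ)) * a ^ (2 * δ)) := by rw [hbδ]; ring
    _ = (C₀ ^ k * (1 + α) * (γ ^ δ) ^ (k - 1) * Γ ^ (-(2 * δ))) * b := by rw [haa, mul_one]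
    _ ≤ γ * b := mul_le_mul_of_nonneg_right hkey hbpos.le
end
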